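/- arXiv:1210.7997 — 6 statements merged into one kernel-verified Lean document; each statement's English description precedes it below -/
import Mathlib

section
/- For every integer l ≥ 3, the sum of ζ(l₁, l₂) over all integers l₁ ≥ 2, l₂ ≥ 1 with l₁ + l₂ = l equals ζ(l). -/
open scoped BigOperators
open Finset

/-- The double zeta value ζ(l₁, l₂) = ∑_{m₁ > m₂ > 0} 1/(m₁^l₁ m₂^l₂). -/
noncomputable def dzeta (l₁ l₂ : ℕ) : ℝ :=
  ∑' p : {q : ℕ+ × ℕ+ // q.2 < q.1}, 1 / ((p.1.1 : ℝ) ^ l₁ * (p.1.2 : ℝ) ^ l₂)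

/-- The Riemann zeta value ζ(l) = ∑_{m ≥ 1} 1/m^l. -/
noncomputable def zetav (l : ℕ) : ℝ := ∑' m : ℕ+, 1 / (m : ℝ) ^ l

/-- T_l(x,y) = ∑_{l₁ ≥ 2, l₂ ≥ 1, l₁+l₂=l} x^(l₁-1) y^(l₂-1) ζ(l₁,l₂). -/
noncomputable def Tl (l : ℕ) (x y : ℂ) : ℂ :=
  ∑ l₁ ∈ Finset.Icc 2 (l - 1), x ^ (l₁ - 1) * y ^ (l - l₁ - 1) * (dzeta l₁ (l - l₁) : ℂ)

noncomputable def omega : ℂ := Complex.exp (2 * Real.pi * Complex.I / 3)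

/-!
Write the pairs `m₁ > m₂` as `(j + k, j)`. With `x = j`, `y = k`, the partial-fraction identity
`∑_{a=2}^{l-1} 1/((x+y)^a x^(l-a)) + 1/(y (x+y)^(l-1)) = 1/(y (x+y) x^(l-2))`
shows that `∑ ζ(a, l - a) + ζ(l - 1, 1)` equals `∑_{j,k} 1/(k (j+k) j^(l-2))`. Summing over `k`
first with `∑_k 1/(k (k+j)) = H_j / j` gives `ζ(l) + ζ(l - 1, 1)`, and `ζ(l - 1, 1)` is finite,
so it cancels. The rearrangements are carried out in `ℝ≥0∞`, where they need no justification.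
-/

open scoped ENNReal Topology
open Filter

theorem hasSum_sub_add_of_antitone {g : ℕ → ℝ} (hg : Antitone g)
    (hg0 : Tendsto g atTop (𝓝 0)) (n : ℕ) :
    HasSum (fun k => g k - g (k + n)) (∑ k ∈ range n, g k) := by
  rw [hasSum_iff_tendsto_nat_of_nonneg fun k => sub_nonneg.2 (hg (Nat.le_add_right k n))]
  have hpartial : ∀ K, ∑ k ∈ range K, (g k - g (k + n))
      = ∑ k ∈ range n, g k - ∑ k ∈ range n, g (K + k) := by
    intro K
    have h := (sum_range_add g K n).symm.trans (add_comm K n ▸ sum_range_add g n K)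
    simp only [sum_sub_distrib, add_comm _ n]
    linarith
  simp_rw [hpartial]
  have htail : Tendsto (fun K => ∑ k ∈ range n, g (K + k)) atTop (𝓝 0) := by
    simpa using tendsto_finsetSum (range n) fun k _ => hg0.comp (tendsto_add_atTop_nat k)
  simpa using tendsto_const_nhds.sub htail

theorem hasSum_inv_mul_add_nat {a : ℝ} (ha : 0 < a) (n : ℕ) (hn : 0 < n) :
    HasSum (fun k : ℕ => ((k + a) * (k + a + n))⁻¹) ((∑ k ∈ range n, (k + a)⁻¹) / n) := by
  have hg : Antitone fun k : ℕ => ((k : ℝ) + a)⁻¹ := fun i j hij => by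
    dsimp only
    gcongr
  have hg0 : Tendsto (fun k : ℕ => ((k : ℝ) + a)⁻¹) atTop (𝓝 0) :=
    (tendsto_atTop_add_const_right _ a tendsto_natCast_atTop_atTop).inv_tendsto_atTop
  have hn' : (0 : ℝ) < n := by exact_mod_cast hn
  have hterm : ∀ k : ℕ, (((k : ℝ) + a) * (k + a + n))⁻¹
      = (((k : ℝ) + a)⁻¹ - (((k + n : ℕ) : ℝ) + a)⁻¹) / n := fun k => by
    push_cast
    field_simp
    ring
  simpa only [hterm] using (hasSum_sub_add_of_antitone hg hg0 n).div_const (n : ℝ)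

theorem sum_range_succPNat_eq_sum_Iic {M : Type*} [AddCommMonoid M] (f : ℕ+ → M) (x : ℕ+) :
    ∑ i ∈ range x, f i.succPNat = ∑ j ∈ Iic x, f j := by
  refine sum_nbij' Nat.succPNat PNat.natPred ?_ ?_ (fun i _ => Nat.natPred_succPNat i)
    (fun j _ => PNat.succPNat_natPred j) fun _ _ => rfl
  · intro i hi
    rw [mem_range] at hi
    rw [mem_Iic, ← PNat.coe_le_coe, Nat.succPNat_coe]
    omega
  · intro j hj
    rw [mem_Iic, ← PNat.coe_le_coe] at hj
    rw [mem_range, PNat.natPred]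
    have := j.pos
    omega

theorem hasSum_pnat_inv_mul_add (x : ℕ+) :
    HasSum (fun k : ℕ+ => ((k : ℝ) * (k + x))⁻¹) ((∑ j ∈ Iic x, (j : ℝ)⁻¹) / x) := by
  refine (hasSum_pnat_iff_hasSum_succ (f := fun k : ℕ => ((k : ℝ) * (k + x))⁻¹)).2 ?_
  rw [← sum_range_succPNat_eq_sum_Iic]
  simpa [add_assoc, add_comm (1 : ℝ)] using hasSum_inv_mul_add_nat one_pos x x.pos

theorem sum_Icc_inv_pow_mul_pow_add_inv {K : Type*} [Field K] {x y : K} (hx : x ≠ 0)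
    (hy : y ≠ 0) (hxy : x + y ≠ 0) (n : ℕ) :
    ∑ a ∈ Icc 2 (n + 1), ((x + y) ^ a * x ^ (n + 2 - a))⁻¹ + (y * (x + y) ^ (n + 1))⁻¹
      = (y * (x + y) * x ^ n)⁻¹ := by
  have hIcc : ∑ a ∈ Icc 2 (n + 1), ((x + y) ^ a * x ^ (n + 2 - a))⁻¹
      = ∑ i ∈ range n, ((x + y) ^ (i + 2) * x ^ (n - i))⁻¹ := by
    rw [← Ico_add_one_right_eq_Icc, sum_Ico_eq_sum_range]
    refine sum_congr (by simp) fun i hi => ?_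
    rw [mem_range] at hi
    rw [add_comm 2 i, show n + 2 - (i + 2) = n - i by omega]
  rw [hIcc]
  clear hIcc
  induction n with
  | zero => simp
  | succ n ih =>
    have hshift : ∑ i ∈ range n, ((x + y) ^ (i + 1 + 2) * x ^ (n + 1 - (i + 1)))⁻¹
        = (x + y)⁻¹ * ∑ i ∈ range n, ((x + y) ^ (i + 2) * x ^ (n - i))⁻¹ := by
      rw [mul_sum]
      refine sum_congr rfl fun i _ => ?_
      rw [Nat.add_sub_add_right, ← mul_inv, ← mul_assoc, ← pow_succ']
    rw [sum_range_succ', hshift, eq_sub_of_add_eq ih, Nat.sub_zero, zero_add]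
    field_simp
    ring

theorem tsum_subtype_lt_eq_tsum_ite {α : Type*} [LT α] [DecidableRel (α := α) (· < ·)]
    (f : α → α → ℝ≥0∞) :
    ∑' p : {q : α × α // q.2 < q.1}, f p.1.1 p.1.2
      = ∑' m, ∑' j, if j < m then f m j else 0 := by
  refine (tsum_subtype {q : α × α | q.2 < q.1} fun q => f q.1 q.2).trans ?_
  rw [ENNReal.tsum_prod']
  simp only [Set.indicator_apply, Set.mem_ofPred_eq]

theorem tsum_subtype_lt_eq_tsum_add (f : ℕ+ → ℕ+ → ℝ≥0∞) :
    ∑' p : {q : ℕ+ × ℕ+ // q.2 < q.1}, f p.1.1 p.1.2 = ∑' j, ∑' k, f (j + k) j := by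
  rw [tsum_subtype_lt_eq_tsum_ite, ENNReal.tsum_comm]
  refine tsum_congr fun j => ?_
  rw [← (add_right_injective j).tsum_eq]
  · exact tsum_congr fun k => if_pos (PNat.lt_add_right j k)
  · intro m hm
    have hjm : j < m := by
      by_contra h
      exact hm (if_neg h)
    exact ⟨m - j, PNat.add_sub_of_lt hjm⟩

theorem tsum_subtype_lt_eq_tsum_sum_Iio (f : ℕ+ → ℕ+ → ℝ≥0∞) :
    ∑' p : {q : ℕ+ × ℕ+ // q.2 < q.1}, f p.1.1 p.1.2 = ∑' m, ∑ j ∈ Iio m, f m j := by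
  rw [tsum_subtype_lt_eq_tsum_ite]
  refine tsum_congr fun m => ?_
  rw [tsum_eq_sum (s := Iio m) fun j hj => if_neg (by simpa using hj)]
  exact sum_congr rfl fun j hj => if_pos (mem_Iio.1 hj)

noncomputable def dzetaENNReal (a b : ℕ) : ℝ≥0∞ :=
  ∑' p : {q : ℕ+ × ℕ+ // q.2 < q.1}, ENNReal.ofReal ((p.1.1 : ℝ) ^ a * (p.1.2 : ℝ) ^ b)⁻¹

noncomputable def zetaENNReal (l : ℕ) : ℝ≥0∞ := ∑' m : ℕ+, ENNReal.ofReal ((m : ℝ) ^ l)⁻¹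

theorem dzeta_eq_toReal (a b : ℕ) : dzeta a b = (dzetaENNReal a b).toReal := by
  rw [dzetaENNReal, ENNReal.tsum_toReal_eq fun _ => ENNReal.ofReal_ne_top, dzeta]
  exact tsum_congr fun p => by rw [ENNReal.toReal_ofReal (by positivity), one_div]

theorem zetav_eq_toReal (l : ℕ) : zetav l = (zetaENNReal l).toReal := by
  rw [zetaENNReal, ENNReal.tsum_toReal_eq fun _ => ENNReal.ofReal_ne_top, zetav]
  exact tsum_congr fun m => by rw [ENNReal.toReal_ofReal (by positivity), one_div]

theorem zetaENNReal_ne_top {l : ℕ} (hl : 2 ≤ l) : zetaENNReal l ≠ ⊤ :=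
  ((Real.summable_nat_pow_inv.2 hl).comp_injective PNat.coe_injective).tsum_ofReal_ne_top

theorem dzetaENNReal_eq_tsum_tsum_add (a b : ℕ) :
    dzetaENNReal a b
      = ∑' j : ℕ+, ∑' k : ℕ+, ENNReal.ofReal ((j + k : ℝ) ^ a * (j : ℝ) ^ b)⁻¹ := by
  rw [dzetaENNReal,
    tsum_subtype_lt_eq_tsum_add fun m j => ENNReal.ofReal ((m : ℝ) ^ a * (j : ℝ) ^ b)⁻¹]
  push_cast
  rfl

theorem tsum_ofReal_inv_add_sq_le (j : ℕ+) :
    ∑' k : ℕ+, ENNReal.ofReal ((j + k : ℝ) ^ 2)⁻¹ ≤ ENNReal.ofReal (j : ℝ)⁻¹ := by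
  have htel : HasSum (fun i : ℕ => ((i + j : ℝ) * (i + j + 1))⁻¹) (j : ℝ)⁻¹ := by
    simpa using hasSum_inv_mul_add_nat (a := (j : ℝ)) (by positivity) 1 one_pos
  rw [tsum_pnat_eq_tsum_succ (f := fun k : ℕ => ENNReal.ofReal ((j + k : ℝ) ^ 2)⁻¹),
    ← htel.tsum_eq, ENNReal.ofReal_tsum_of_nonneg (fun _ => by positivity) htel.summable]
  refine ENNReal.tsum_le_tsum fun i => ENNReal.ofReal_le_ofReal ?_
  gcongr
  push_cast
  nlinarith

theorem dzetaENNReal_ne_top {s : ℕ} (hs : 2 ≤ s) : dzetaENNReal s 1 ≠ ⊤ := by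
  refine ne_top_of_le_ne_top (zetaENNReal_ne_top le_rfl) ?_
  calc dzetaENNReal s 1
      = ∑' j : ℕ+, ∑' k : ℕ+, ENNReal.ofReal ((j + k : ℝ) ^ s * (j : ℝ) ^ 1)⁻¹ :=
        dzetaENNReal_eq_tsum_tsum_add s 1
    _ ≤ ∑' j : ℕ+, ENNReal.ofReal (j : ℝ)⁻¹ * ∑' k : ℕ+, ENNReal.ofReal ((j + k : ℝ) ^ 2)⁻¹ := by
        refine ENNReal.tsum_le_tsum fun j => ?_
        rw [← ENNReal.tsum_mul_left]
        refine ENNReal.tsum_le_tsum fun k => ?_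
        rw [← ENNReal.ofReal_mul (by positivity), pow_one, ← mul_inv, mul_comm]
        have hjk : (1 : ℝ) ≤ j + k :=
          le_add_of_le_of_nonneg (Nat.one_le_cast.2 j.pos) (Nat.cast_nonneg _)
        gcongr
    _ ≤ ∑' j : ℕ+, ENNReal.ofReal (j : ℝ)⁻¹ * ENNReal.ofReal (j : ℝ)⁻¹ := by
        gcongr with j
        exact tsum_ofReal_inv_add_sq_le j
    _ = zetaENNReal 2 := by
        refine tsum_congr fun j => ?_
        rw [← ENNReal.ofReal_mul (by positivity), sq, mul_inv]

theorem tsum_tsum_inv_mul_add_mul_pow (n : ℕ) :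
    ∑' j : ℕ+, ∑' k : ℕ+, ENNReal.ofReal ((k : ℝ) * (j + k) * (j : ℝ) ^ n)⁻¹
      = zetaENNReal (n + 2) + dzetaENNReal (n + 1) 1 := by
  rw [zetaENNReal, dzetaENNReal, tsum_subtype_lt_eq_tsum_sum_Iio
    fun m j => ENNReal.ofReal ((m : ℝ) ^ (n + 1) * (j : ℝ) ^ 1)⁻¹, ← ENNReal.tsum_add]
  refine tsum_congr fun j => ?_
  have hj : (0 : ℝ) < j := by exact_mod_cast j.pos
  have hsum : HasSum (fun k : ℕ+ => ((k : ℝ) * (j + k) * (j : ℝ) ^ n)⁻¹)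
      (((j : ℝ) ^ (n + 2))⁻¹ + ∑ i ∈ Iio j, ((j : ℝ) ^ (n + 1) * (i : ℝ) ^ 1)⁻¹) := by
    have hval : ((j : ℝ) ^ (n + 2))⁻¹ + ∑ i ∈ Iio j, ((j : ℝ) ^ (n + 1) * (i : ℝ) ^ 1)⁻¹
        = (∑ i ∈ Iic j, (i : ℝ)⁻¹) / j * ((j : ℝ) ^ n)⁻¹ := by
      rw [← Iio_insert, sum_insert (by simp), add_div, add_mul, sum_div, sum_mul]
      congr 1
      · field_simp
        ring
      · refine sum_congr rfl fun i _ => ?_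
        field_simp
        ring
    rw [hval]
    exact ((hasSum_pnat_inv_mul_add j).mul_right _).congr_fun fun k => by
      rw [add_comm (j : ℝ), ← mul_inv]
  rw [← ENNReal.ofReal_tsum_of_nonneg (fun _ => by positivity) hsum.summable, hsum.tsum_eq,
    ENNReal.ofReal_add (by positivity) (by positivity),
    ENNReal.ofReal_sum_of_nonneg fun _ _ => by positivity]

theorem tsum_tsum_inv_mul_add_pow (s : ℕ) :
    ∑' j : ℕ+, ∑' k : ℕ+, ENNReal.ofReal ((k : ℝ) * (j + k) ^ s)⁻¹ = dzetaENNReal s 1 := by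
  rw [dzetaENNReal_eq_tsum_tsum_add, ENNReal.tsum_comm]
  exact tsum_congr fun k => tsum_congr fun j => by rw [pow_one, mul_comm, add_comm (j : ℝ)]

theorem sum_dzetaENNReal_add (n : ℕ) :
    ∑ a ∈ Icc 2 (n + 1), dzetaENNReal a (n + 2 - a) + dzetaENNReal (n + 1) 1
      = zetaENNReal (n + 2) + dzetaENNReal (n + 1) 1 := by
  simp_rw [← tsum_tsum_inv_mul_add_mul_pow, ← tsum_tsum_inv_mul_add_pow,
    dzetaENNReal_eq_tsum_tsum_add]
  rw [← Summable.tsum_finsetSum fun _ _ => ENNReal.summable, ← ENNReal.tsum_add]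
  refine tsum_congr fun j => ?_
  rw [← Summable.tsum_finsetSum fun _ _ => ENNReal.summable, ← ENNReal.tsum_add]
  refine tsum_congr fun k => ?_
  have hj : (0 : ℝ) < j := by exact_mod_cast j.pos
  have hk : (0 : ℝ) < k := by exact_mod_cast k.pos
  rw [← ENNReal.ofReal_sum_of_nonneg fun _ _ => by positivity,
    ← ENNReal.ofReal_add (by positivity) (by positivity),
    sum_Icc_inv_pow_mul_pow_add_inv hj.ne' hk.ne' (by positivity)]

theorem sum_dzetaENNReal_eq_zetaENNReal {n : ℕ} (hn : 1 ≤ n) :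
    ∑ a ∈ Icc 2 (n + 1), dzetaENNReal a (n + 2 - a) = zetaENNReal (n + 2) :=
  (ENNReal.add_left_inj (dzetaENNReal_ne_top (by omega))).1 (sum_dzetaENNReal_add n)

theorem stmt0 (l : ℕ) (hl : 3 ≤ l) :
    ∑ l₁ ∈ Finset.Icc 2 (l - 1), dzeta l₁ (l - l₁) = zetav l := by
  obtain ⟨n, rfl⟩ : ∃ n, l = n + 2 := ⟨l - 2, by omega⟩
  have hsum := sum_dzetaENNReal_eq_zetaENNReal (n := n) (by omega)
  have hfin : ∀ a ∈ Icc 2 (n + 1), dzetaENNReal a (n + 2 - a) ≠ ⊤ := fun a ha =>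
    ne_top_of_le_ne_top (hsum ▸ zetaENNReal_ne_top (by omega))
      (single_le_sum (f := fun a => dzetaENNReal a (n + 2 - a)) (fun _ _ => zero_le) ha)
  rw [show n + 2 - 1 = n + 1 by omega, zetav_eq_toReal, ← hsum, ENNReal.toReal_sum hfin]
  exact sum_congr rfl fun a _ => dzeta_eq_toReal a _
end

section
/- For every even integer l ≥ 4, the sum of ζ(l₁, l₂) over all integers l₁ ≥ 2, l₂ ≥ 1 with l₁ + l₂ = l and both l₁ and l₂ even equals (3/4)·ζ(l). -/
open scoped BigOperators
open Finset

/-! Summing the stuffle relation ζ(a)ζ(b) = ζ(a,b) + ζ(b,a) + ζ(a+b) over the splittings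
l = a + b into even parts a, b ≥ 2 gives 2 S + (l/2 - 1) ζ(l) = ∑ ζ(a)ζ(l-a), where S is the
sum in question. By Euler's formula for ζ(2k), the right-hand side is a convolution of Bernoulli
numbers; the differential equation satisfied by their generating function t/(eᵗ - 1) evaluates it
to ((l+1)/2) ζ(l), whence S = (3/4) ζ(l). -/

open PowerSeries in
theorem bernoulliPowerSeries_mul_self (A : Type*) [CommRing A] [Algebra ℚ A] :
    bernoulliPowerSeries A * bernoulliPowerSeries A =
      bernoulliPowerSeries A - X * bernoulliPowerSeries A
        - X * d⁄dX A (bernoulliPowerSeries A) := by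
  set f := bernoulliPowerSeries A
  -- differentiate `f (eˣ - 1) = X` and eliminate `eˣ`
  have h : f * (exp A - 1) = X := bernoulliPowerSeries_mul_exp_sub_one A
  have h' := congrArg (d⁄dX A) h
  rw [Derivation.leibniz, map_sub, derivative_exp, Derivation.map_one_eq_zero, derivative_X,
    smul_eq_mul, smul_eq_mul, sub_zero] at h'
  linear_combination (-d⁄dX A f - f) * h + f * h'

open PowerSeries Nat in
theorem sum_range_choose_mul_bernoulli_mul_bernoulli (n : ℕ) :
    ∑ i ∈ range (n + 1), (n.choose i : ℚ) * bernoulli i * bernoulli (n - i) =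
      (1 - n) * bernoulli n - n * bernoulli (n - 1) := by
  rcases n with _ | m
  · simp
  have h := congrArg (coeff (m + 1)) (bernoulliPowerSeries_mul_self ℚ)
  rw [map_sub, map_sub, coeff_succ_X_mul, coeff_succ_X_mul, coeff_mul,
    Nat.sum_antidiagonal_eq_sum_range_succ_mk] at h
  simp only [coeff_derivative, bernoulliPowerSeries, coeff_mk, Algebra.algebraMap_self,
    RingHom.id_apply] at h
  have hterm : ∀ i ∈ range (m + 1 + 1),
      ((m + 1).choose i : ℚ) * bernoulli i * bernoulli (m + 1 - i) =
        (m + 1)! * (bernoulli i / i ! * (bernoulli (m + 1 - i) / (m + 1 - i)!)) := by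
    intro i hi
    rw [Nat.cast_choose ℚ (Nat.lt_succ_iff.mp (mem_range.mp hi))]
    field_simp
  rw [sum_congr rfl hterm, ← mul_sum, h, Nat.factorial_succ]
  push_cast
  field_simp
  ring

def evenSplits (l : ℕ) : Finset ℕ :=
  (Icc 2 (l - 1)).filter (fun i => i % 2 = 0 ∧ (l - i) % 2 = 0)

theorem mem_evenSplits {l i : ℕ} :
    i ∈ evenSplits l ↔ (2 ≤ i ∧ i ≤ l - 1) ∧ i % 2 = 0 ∧ (l - i) % 2 = 0 := by
  rw [evenSplits, mem_filter, mem_Icc]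

theorem two_mul_card_evenSplits_add_two {l : ℕ} (hev : Even l) (hl : l ≠ 0) :
    2 * #(evenSplits l) + 2 = l := by
  rw [Nat.even_iff] at hev
  have h : evenSplits l =
      (Icc 1 (l / 2 - 1)).map ⟨(2 * ·), mul_right_injective₀ two_ne_zero⟩ := by
    ext i
    simp only [mem_evenSplits, mem_map, mem_Icc, Function.Embedding.coeFn_mk]
    constructor
    · intro hi
      exact ⟨i / 2, by omega, by omega⟩
    · rintro ⟨j, hj, rfl⟩
      omega
  rw [h, card_map, Nat.card_Icc]
  omega

theorem sum_evenSplits_reflect {M : Type*} [AddCommMonoid M] (l : ℕ) (f : ℕ → ℕ → M) :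
    ∑ i ∈ evenSplits l, f (l - i) i = ∑ i ∈ evenSplits l, f i (l - i) := by
  refine sum_nbij' (l - ·) (l - ·) ?_ ?_ ?_ ?_ ?_ <;> intro i hi <;> rw [mem_evenSplits] at hi
  · rw [mem_evenSplits]; omega
  · rw [mem_evenSplits]; omega
  · omega
  · omega
  · rw [Nat.sub_sub_self (by omega)]

theorem sum_evenSplits_choose_mul_bernoulli_mul_bernoulli {l : ℕ} (hl : 4 ≤ l) (hev : Even l) :
    ∑ i ∈ evenSplits l, (l.choose i : ℚ) * bernoulli i * bernoulli (l - i) =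
      -(l + 1) * bernoulli l := by
  rw [Nat.even_iff] at hev
  have hsub : insert 0 (insert l (evenSplits l)) ⊆ range (l + 1) := by
    intro i hi
    simp only [mem_insert, mem_evenSplits] at hi
    rw [mem_range]
    omega
  have hodd : ∀ i ∈ range (l + 1), i ∉ insert 0 (insert l (evenSplits l)) →
      (l.choose i : ℚ) * bernoulli i * bernoulli (l - i) = 0 := by
    intro i hi hni
    simp only [mem_range, mem_insert, mem_evenSplits, not_or] at hi hni
    rcases eq_or_ne i 1 with rfl | hi1
    · rw [bernoulli_eq_zero_of_odd (n := l - 1) (Nat.odd_iff.mpr (by omega)) (by omega), mul_zero]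
    · rw [bernoulli_eq_zero_of_odd (n := i) (Nat.odd_iff.mpr (by omega)) (by omega), mul_zero,
        zero_mul]
  have h := sum_range_choose_mul_bernoulli_mul_bernoulli l
  rw [← sum_subset hsub hodd, sum_insert (by rw [mem_insert, mem_evenSplits]; omega),
    sum_insert (by rw [mem_evenSplits]; omega),
    bernoulli_eq_zero_of_odd (n := l - 1) (Nat.odd_iff.mpr (by omega)) (by omega)] at h
  simp only [Nat.choose_zero_right, Nat.choose_self, Nat.sub_zero, Nat.sub_self,
    bernoulli_zero] at h
  push_cast at h
  linarith

open Real Nat in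
theorem zetav_of_even {n : ℕ} (hn : Even n) (hn0 : n ≠ 0) :
    zetav n = -(-1) ^ (n / 2) * (2 * π) ^ n * bernoulli n / (2 * n !) := by
  obtain ⟨k, rfl⟩ := hn.two_dvd
  have hk : k ≠ 0 := by omega
  rw [zetav, tsum_pnat_eq_tsum_of_eq_zero (f := fun m : ℕ => 1 / (m : ℝ) ^ (2 * k))
    (by simp [hn0]), (hasSum_zeta_nat hk).tsum_eq, Nat.mul_div_cancel_left k two_pos]
  obtain ⟨j, rfl⟩ : ∃ j, k = j + 1 := ⟨k - 1, by omega⟩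
  rw [show 2 * (j + 1) - 1 = 2 * j + 1 by omega]
  ring

open Real Nat in
theorem sum_evenSplits_zetav_mul_zetav {l : ℕ} (hl : 4 ≤ l) (hev : Even l) :
    ∑ i ∈ evenSplits l, zetav i * zetav (l - i) = (l + 1) / 2 * zetav l := by
  have hterm : ∀ i ∈ evenSplits l, zetav i * zetav (l - i) =
      (-1) ^ (l / 2) * (2 * π) ^ l / (4 * l !) *
        (((l.choose i : ℚ) * bernoulli i * bernoulli (l - i) : ℚ) : ℝ) := by
    intro i hi
    rw [mem_evenSplits] at hi
    have hil : i ≤ l := by omega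
    have hsign : (-1 : ℝ) ^ (l / 2) = (-1) ^ (i / 2) * (-1) ^ ((l - i) / 2) := by
      rw [← pow_add]; congr 1; omega
    have hpow : (2 * π) ^ l = (2 * π) ^ i * (2 * π) ^ (l - i) := by
      rw [← pow_add, Nat.add_sub_cancel' hil]
    have hfac : (l ! : ℝ) = l.choose i * i ! * (l - i)! := by
      exact_mod_cast (Nat.choose_mul_factorial_mul_factorial hil).symm
    have hchoose : (l.choose i : ℝ) ≠ 0 := by exact_mod_cast (Nat.choose_pos hil).ne'
    rw [zetav_of_even (Nat.even_iff.mpr hi.2.1) (by omega),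
      zetav_of_even (Nat.even_iff.mpr hi.2.2) (by omega), hsign, hpow, hfac]
    push_cast
    field_simp
    ring
  rw [sum_congr rfl hterm, ← mul_sum, ← Rat.cast_sum,
    sum_evenSplits_choose_mul_bernoulli_mul_bernoulli hl hev, zetav_of_even hev (by omega)]
  push_cast
  field_simp
  ring

theorem summable_one_div_pnat_pow {p : ℕ} (hp : 1 < p) :
    Summable fun m : ℕ+ => 1 / (m : ℝ) ^ p :=
  (Real.summable_one_div_nat_pow.mpr hp).comp_injective PNat.coe_injective

theorem zetav_mul_zetav {a b : ℕ} (ha : 2 ≤ a) (hb : 2 ≤ b) :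
    zetav a * zetav b = dzeta a b + dzeta b a + zetav (a + b) := by
  set F : ℕ+ × ℕ+ → ℝ := fun q => 1 / (q.1 : ℝ) ^ a * (1 / (q.2 : ℝ) ^ b)
  have hF : Summable F := (summable_one_div_pnat_pow ha).mul_of_nonneg
    (summable_one_div_pnat_pow hb) (fun _ => by positivity) (fun _ => by positivity)
  have hlower : ∑' q : {q : ℕ+ × ℕ+ | q.2 < q.1}, F q = dzeta a b :=
    tsum_congr fun q => one_div_mul_one_div _ _
  have hupper : ∑' q : {q : ℕ+ × ℕ+ | q.1 < q.2}, F q = dzeta b a := by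
    rw [dzeta, ← (Equiv.subtypeEquiv (Equiv.prodComm ℕ+ ℕ+) fun _ => Iff.rfl).tsum_eq]
    exact tsum_congr fun q => (one_div_mul_one_div _ _).trans (congrArg (1 / ·) (mul_comm _ _))
  have hdiag : ∑' q : Set.diagonal ℕ+, F q = zetav (a + b) := by
    rw [← Set.range_diag, tsum_range F Function.diag_injective, zetav]
    exact tsum_congr fun m =>
      (one_div_mul_one_div _ _).trans (congrArg (1 / ·) (pow_add _ _ _).symm)
  have hcompl : {q : ℕ+ × ℕ+ | q.2 < q.1}ᶜ = {q | q.1 < q.2} ∪ Set.diagonal ℕ+ := by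
    ext q
    simp [le_iff_lt_or_eq]
  have hdisj : Disjoint {q : ℕ+ × ℕ+ | q.1 < q.2} (Set.diagonal ℕ+) :=
    Set.disjoint_left.mpr fun q hlt heq => hlt.ne heq
  rw [zetav, zetav, (summable_one_div_pnat_pow ha).tsum_mul_tsum
    (summable_one_div_pnat_pow hb) hF, ← (hF.subtype _).tsum_add_tsum_compl (hF.subtype _),
    hcompl, (hF.subtype _).tsum_union_disjoint hdisj (hF.subtype _), hlower, hupper, hdiag]
  ring

theorem stmt1 (l : ℕ) (hl : 4 ≤ l) (hev : l % 2 = 0) :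
    ∑ l₁ ∈ (Finset.Icc 2 (l - 1)).filter (fun l₁ => l₁ % 2 = 0 ∧ (l - l₁) % 2 = 0),
      dzeta l₁ (l - l₁) = (3 / 4) * zetav l := by
  change ∑ i ∈ evenSplits l, dzeta i (l - i) = _
  have hev' : Even l := Nat.even_iff.mpr hev
  have hstuffle : ∀ i ∈ evenSplits l,
      zetav i * zetav (l - i) = dzeta i (l - i) + dzeta (l - i) i + zetav l := by
    intro i hi
    rw [mem_evenSplits] at hi
    rw [zetav_mul_zetav (by omega) (by omega), Nat.add_sub_cancel' (by omega)]
  have hsum := sum_congr rfl hstuffle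
  rw [sum_add_distrib, sum_add_distrib, sum_evenSplits_reflect l dzeta, sum_const, nsmul_eq_mul,
    sum_evenSplits_zetav_mul_zetav hl hev'] at hsum
  have hcard : (2 * #(evenSplits l) + 2 : ℝ) = l := by
    exact_mod_cast two_mul_card_evenSplits_add_two hev' (by omega)
  linear_combination -hsum / 2 - zetav l / 4 * hcard
end

section
/- Let l ≥ 8 be an integer with l ≡ 2 (mod 6). Then for each m ∈ {0, 2, 4}, ∑_{j=0, j ≡ m (mod 6)}^{l} C(l,j) B_j B_{l-j} = −((l−1)/3)·B_l, where B_m are the Bernoulli numbers. -/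
/-!
Let `F(X) = X / (e^X - 1) = ∑ B_n X^n / n!`. Up to the factor `l!`, the sums
`∑_j C(l,j) c^j d^(l-j) B_j B_(l-j)` are the coefficients of `X^l` in `F(cX) F(dX)`.
Comparing coefficients in the addition formula
`(c + d) X F(cX) F(dX) = F((c+d)X) (dX F(cX) + cX F(dX) + cd X²)`
at `c = ζ`, `d = ζ²` for a primitive cube root of unity `ζ` shows that the sum vanishes at
`(c, d) = (ζ, 1)` and `(ζ², 1)` when `l ≡ 2 (mod 6)`, while at `(1, 1)` it is `-(l - 1) B_l` by
Euler's identity. Only even `j` contribute, and for them `j mod 6` is determined by `j mod 3`, so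
the filter by cube roots of unity gives each residue class a third of the total.
-/

open scoped BigOperators
open Finset

open PowerSeries

section CommRing

variable {A : Type*} [CommRing A] [Algebra ℚ A]

theorem coeff_bernoulliPowerSeries_eq_zero_of_odd {n : ℕ} (h_odd : Odd n) (hlt : 1 < n) :
    coeff n (bernoulliPowerSeries A) = 0 := by
  simp [bernoulliPowerSeries, bernoulli_eq_zero_of_odd h_odd hlt]

theorem rescale_neg_one_bernoulliPowerSeries :
    rescale (-1 : A) (bernoulliPowerSeries A) = bernoulliPowerSeries A + X := by
  ext n
  rw [coeff_rescale, map_add, coeff_X, bernoulliPowerSeries, coeff_mk]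
  rcases eq_or_ne n 1 with rfl | hn
  · simp only [pow_one, bernoulli_one, Nat.factorial_one, Nat.cast_one, div_one, if_true]
    rw [← map_one (algebraMap ℚ A), ← map_neg, ← map_mul, ← map_add]
    norm_num
  · rw [if_neg hn, add_zero, ← map_one (algebraMap ℚ A), ← map_neg, ← map_pow, ← map_mul,
      ← mul_div_assoc, ← bernoulli'_eq_bernoulli, bernoulli_eq_bernoulli'_of_ne_one hn]

noncomputable def bernoulliConv (n : ℕ) (c d : A) : A :=
  coeff n (rescale c (bernoulliPowerSeries A) * rescale d (bernoulliPowerSeries A))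

theorem bernoulliConv_comm (n : ℕ) (c d : A) : bernoulliConv n c d = bernoulliConv n d c := by
  rw [bernoulliConv, bernoulliConv, mul_comm]

theorem bernoulliConv_mul_mul (n : ℕ) (a c d : A) :
    bernoulliConv n (a * c) (a * d) = a ^ n * bernoulliConv n c d := by
  rw [bernoulliConv, bernoulliConv, mul_comm a c, mul_comm a d, rescale_mul, rescale_mul,
    RingHom.comp_apply, RingHom.comp_apply, ← map_mul, coeff_rescale]

theorem bernoulliConv_eq_sum (n : ℕ) (c d : A) :
    bernoulliConv n c d = ∑ i ∈ range (n + 1), c ^ i * d ^ (n - i) *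
      (coeff i (bernoulliPowerSeries A) * coeff (n - i) (bernoulliPowerSeries A)) := by
  rw [bernoulliConv, coeff_mul, Nat.sum_antidiagonal_eq_sum_range_succ_mk]
  refine sum_congr rfl fun i _ => ?_
  rw [coeff_rescale, coeff_rescale]
  ring

theorem bernoulliConv_neg_left (n : ℕ) (c d : A) :
    bernoulliConv (n + 1) (-c) d
      = bernoulliConv (n + 1) c d + c * d ^ n * coeff n (bernoulliPowerSeries A) := by
  rw [bernoulliConv, bernoulliConv, neg_eq_neg_one_mul, rescale_mul, RingHom.comp_apply,
    rescale_neg_one_bernoulliPowerSeries, map_add, rescale_X, add_mul, map_add, mul_assoc,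
    mul_assoc, coeff_C_mul, coeff_succ_X_mul, coeff_rescale]

end CommRing

section Field

variable {K : Type*} [Field K] [CharZero K]

theorem rescale_exp_sub_one_ne_zero {c : K} (hc : c ≠ 0) : rescale c (exp K) - 1 ≠ 0 := by
  intro h
  have := congrArg (coeff 1) h
  simp [coeff_rescale, coeff_exp] at this
  exact hc this

theorem rescale_bernoulliPowerSeries_mul_exp_sub_one (c : K) :
    rescale c (bernoulliPowerSeries K) * (rescale c (exp K) - 1) = C c * X := by
  simpa only [map_mul, map_sub, map_one, rescale_X] using
    congrArg (rescale c) (bernoulliPowerSeries_mul_exp_sub_one K)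

/-- Clearing the denominators `e^{cX} - 1` and `e^{dX} - 1` of `F(X) = X / (e^X - 1)`, this is
`e^{(c+d)X} - 1 = (e^{cX} - 1)(e^{dX} - 1) + (e^{cX} - 1) + (e^{dX} - 1)`. -/
theorem rescale_bernoulliPowerSeries_mul_rescale {c d : K} (hc : c ≠ 0) (hd : d ≠ 0) :
    C (c + d) * X * (rescale c (bernoulliPowerSeries K) * rescale d (bernoulliPowerSeries K))
      = rescale (c + d) (bernoulliPowerSeries K) * (C d * X * rescale c (bernoulliPowerSeries K)
        + C c * X * rescale d (bernoulliPowerSeries K) + C (c * d) * X ^ 2) := by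
  set Fc := rescale c (bernoulliPowerSeries K)
  set Fd := rescale d (bernoulliPowerSeries K)
  set Fcd := rescale (c + d) (bernoulliPowerSeries K)
  set a := rescale c (exp K) - 1
  set b := rescale d (exp K) - 1
  have hFc : Fc * a = C c * X := rescale_bernoulliPowerSeries_mul_exp_sub_one c
  have hFd : Fd * b = C d * X := rescale_bernoulliPowerSeries_mul_exp_sub_one d
  have hFcd : Fcd * (a * b + a + b) = (C c + C d) * X := by
    rw [← map_add, ← rescale_bernoulliPowerSeries_mul_exp_sub_one, ← exp_mul_exp_eq_exp_add]
    ring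
  apply mul_right_cancel₀ (mul_ne_zero (rescale_exp_sub_one_ne_zero hc)
    (rescale_exp_sub_one_ne_zero hd))
  rw [map_add, map_mul]
  linear_combination ((C c + C d) * X * Fd * b - Fcd * C d * X * b) * hFc
    + ((C c + C d) * X * C c * X - Fcd * C c * X * a) * hFd - C c * C d * X ^ 2 * hFcd

theorem bernoulliConv_add (n : ℕ) {c d : K} (hc : c ≠ 0) (hd : d ≠ 0) :
    (c + d) * bernoulliConv (n + 1) c d
      = d * bernoulliConv (n + 1) (c + d) c + c * bernoulliConv (n + 1) (c + d) d
        + c * d * (c + d) ^ n * coeff n (bernoulliPowerSeries K) := by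
  set F := bernoulliPowerSeries K
  have h : C (c + d) * (X * (rescale c F * rescale d F))
      = C d * (X * (rescale (c + d) F * rescale c F))
        + C c * (X * (rescale (c + d) F * rescale d F))
        + C (c * d) * (X ^ 2 * rescale (c + d) F) := by
    linear_combination rescale_bernoulliPowerSeries_mul_rescale hc hd
  have h' := congrArg (coeff (n + 2)) h
  rw [coeff_C_mul, map_add, map_add, coeff_C_mul, coeff_C_mul, coeff_C_mul, coeff_X_pow_mul,
    coeff_succ_X_mul, coeff_succ_X_mul, coeff_succ_X_mul, coeff_rescale] at h'
  rw [bernoulliConv, bernoulliConv, bernoulliConv, h']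
  ring

theorem X_mul_derivative_bernoulliPowerSeries :
    X * d⁄dX K (bernoulliPowerSeries K)
      = bernoulliPowerSeries K - X * bernoulliPowerSeries K - bernoulliPowerSeries K ^ 2 := by
  set F := bernoulliPowerSeries K
  have hF : F * (exp K - 1) = X := bernoulliPowerSeries_mul_exp_sub_one K
  have hF' : d⁄dX K F * (exp K - 1) + F * exp K = 1 := by
    simpa [Derivation.leibniz, derivative_exp, add_comm, mul_comm] using congrArg (d⁄dX K) hF
  apply mul_right_cancel₀ (by simpa using rescale_exp_sub_one_ne_zero (c := (1 : K)) one_ne_zero)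
  linear_combination X * hF' - (1 - F) * hF

/-- Euler's identity `∑ C(n+1, i) B_i B_{n+1-i} = -n B_{n+1} - (n+1) B_n`. -/
theorem bernoulliConv_one_one (n : ℕ) :
    bernoulliConv (n + 1) (1 : K) 1
      = -(n : K) * coeff (n + 1) (bernoulliPowerSeries K) - coeff n (bernoulliPowerSeries K) := by
  have h := congrArg (coeff (n + 1)) (X_mul_derivative_bernoulliPowerSeries (K := K))
  rw [coeff_succ_X_mul, coeff_derivative, map_sub, map_sub, coeff_succ_X_mul, sq] at h
  rw [bernoulliConv, rescale_one, RingHom.id_apply]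
  linear_combination h

end Field

namespace IsPrimitiveRoot

variable {K : Type*} [Field K] {ζ : K}

theorem one_add_pow_add_pow_two_mul (hζ : IsPrimitiveRoot ζ 3) (e : ℕ) :
    1 + ζ ^ e + ζ ^ (2 * e) = if 3 ∣ e then 3 else 0 := by
  split_ifs with he
  · obtain ⟨q, rfl⟩ := he
    rw [pow_mul, mul_left_comm, pow_mul, hζ.pow_eq_one, one_pow, one_pow]
    norm_num
  · have hprim : IsPrimitiveRoot (ζ ^ e) 3 :=
      hζ.pow_of_coprime e ((Nat.Prime.coprime_iff_not_dvd Nat.prime_three).2 he).symm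
    simpa [sum_range_succ, ← pow_mul, mul_comm e] using
      hprim.geom_sum_eq_zero (by norm_num)

theorem three_mul_sum_filter_mod_six (hζ : IsPrimitiveRoot ζ 3) {m : ℕ}
    (hm : m = 0 ∨ m = 2 ∨ m = 4) (s : Finset ℕ) {f : ℕ → K} (hf : ∀ j, Odd j → f j = 0) :
    3 * ∑ j ∈ s with j % 6 = m, f j
      = ∑ j ∈ s, f j + ζ ^ (2 * m) * ∑ j ∈ s, ζ ^ j * f j
        + ζ ^ (4 * m) * ∑ j ∈ s, (ζ ^ 2) ^ j * f j := by
  rw [sum_filter, mul_sum, mul_sum, mul_sum, ← sum_add_distrib, ← sum_add_distrib]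
  refine sum_congr rfl fun j _ => ?_
  rcases Nat.even_or_odd j with hj | hj
  · have hmod : j % 6 = m ↔ 3 ∣ 2 * m + j := by
      obtain ⟨r, rfl⟩ := hj
      omega
    calc 3 * (if j % 6 = m then f j else 0)
        = (1 + ζ ^ (2 * m + j) + ζ ^ (2 * (2 * m + j))) * f j := by
          rw [hζ.one_add_pow_add_pow_two_mul, if_congr hmod rfl rfl]
          split_ifs <;> ring
      _ = _ := by ring
  · simp [hf j hj]

end IsPrimitiveRoot

section CubeRoot

variable {K : Type*} [Field K] [CharZero K] {ζ : K}

theorem bernoulliConv_eq_zero_of_isPrimitiveRoot (hζ : IsPrimitiveRoot ζ 3) {n : ℕ}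
    (hn : n % 6 = 2) (h8 : 8 ≤ n) : bernoulliConv n ζ 1 = 0 := by
  obtain ⟨k, rfl⟩ : ∃ k, n = k + 1 := ⟨n - 1, by omega⟩
  have hb : coeff k (bernoulliPowerSeries K) = 0 :=
    coeff_bernoulliPowerSeries_eq_zero_of_odd (Nat.odd_iff.2 (by omega)) (by omega)
  have hneg (x : K) : bernoulliConv (k + 1) (-1) x = bernoulliConv (k + 1) 1 x := by
    rw [bernoulliConv_neg_left, hb, mul_zero, add_zero]
  have hζ0 : ζ ≠ 0 := hζ.ne_zero (by norm_num)
  have hζ3 : ζ ^ 3 = 1 := hζ.pow_eq_one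
  have hsum : ζ + ζ ^ 2 = -1 := by
    linear_combination (by simpa [sum_range_succ] using hζ.geom_sum_eq_zero (by norm_num) :
      1 + ζ + ζ ^ 2 = 0)
  have hpow : ζ ^ (k + 1) = ζ ^ 2 := by
    obtain ⟨q, hq⟩ : ∃ q, k + 1 = 3 * q + 2 := ⟨k / 3, by omega⟩
    rw [hq, pow_add, pow_mul, hζ3, one_pow, one_mul]
  -- Use the addition formula at `c = ζ`, `d = ζ ^ 2`, where `c + d = -1`: by homogeneity,
  -- evenness and symmetry each of its terms is a multiple of `A`; it collapses to `3 ζ² A = 0`.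
  set A := bernoulliConv (k + 1) ζ 1
  have hζζ2 : bernoulliConv (k + 1) ζ (ζ ^ 2) = ζ ^ 2 * A := by
    have h := bernoulliConv_mul_mul (k + 1) ζ 1 ζ
    rwa [mul_one, ← sq, hpow, bernoulliConv_comm _ 1] at h
  have hneg_ζ : bernoulliConv (k + 1) (-1) ζ = A := by
    rw [hneg, bernoulliConv_comm]
  have hneg_ζ2 : bernoulliConv (k + 1) (-1) (ζ ^ 2) = ζ * A := by
    have h := bernoulliConv_mul_mul (k + 1) (ζ ^ 2) ζ 1
    have hζ2ζ : ζ ^ 2 * ζ = 1 := by rw [← pow_succ, hζ3]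
    have hζ2pow : (ζ ^ 2) ^ (k + 1) = ζ := by
      rw [← pow_mul, mul_comm, pow_mul, hpow]
      linear_combination ζ * hζ3
    rw [hζ2ζ, mul_one, hζ2pow] at h
    rw [hneg, h]
  have hadd := bernoulliConv_add k hζ0 (pow_ne_zero 2 hζ0)
  rw [hsum, hζζ2, hneg_ζ, hneg_ζ2, hb, mul_zero] at hadd
  have h3A : (3 * ζ ^ 2) * A = 0 := by linear_combination -hadd
  exact (mul_eq_zero.1 h3A).resolve_left (mul_ne_zero three_ne_zero (pow_ne_zero 2 hζ0))

theorem three_mul_sum_filter_mod_six_coeff_bernoulliPowerSeries (hζ : IsPrimitiveRoot ζ 3)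
    {n : ℕ} (hn : n % 6 = 2) (h8 : 8 ≤ n) {m : ℕ} (hm : m = 0 ∨ m = 2 ∨ m = 4) :
    3 * ∑ j ∈ range (n + 1) with j % 6 = m,
        coeff j (bernoulliPowerSeries K) * coeff (n - j) (bernoulliPowerSeries K)
      = -((n : K) - 1) * coeff n (bernoulliPowerSeries K) := by
  obtain ⟨k, rfl⟩ : ∃ k, n = k + 1 := ⟨n - 1, by omega⟩
  set F := bernoulliPowerSeries K
  have hb : coeff k F = 0 :=
    coeff_bernoulliPowerSeries_eq_zero_of_odd (Nat.odd_iff.2 (by omega)) (by omega)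
  have hodd (j : ℕ) (hj : Odd j) : coeff j F * coeff (k + 1 - j) F = 0 := by
    rcases eq_or_ne j 1 with rfl | hj1
    · rw [Nat.add_sub_cancel, hb, mul_zero]
    · rw [coeff_bernoulliPowerSeries_eq_zero_of_odd hj (by grind), zero_mul]
  have hconv (c : K) : bernoulliConv (k + 1) c 1
      = ∑ j ∈ range (k + 2), c ^ j * (coeff j F * coeff (k + 1 - j) F) := by
    simp only [bernoulliConv_eq_sum, one_pow, mul_one]
    rfl
  have hconv_one := hconv 1
  simp only [one_pow, one_mul] at hconv_one
  rw [hζ.three_mul_sum_filter_mod_six hm _ hodd, ← hconv, ← hconv, ← hconv_one,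
    bernoulliConv_eq_zero_of_isPrimitiveRoot hζ hn h8,
    bernoulliConv_eq_zero_of_isPrimitiveRoot (hζ.pow_of_coprime 2 (by norm_num)) hn h8,
    bernoulliConv_one_one, hb]
  push_cast
  ring

end CubeRoot

theorem three_mul_sum_filter_mod_six_bernoulli_div_factorial {n : ℕ} (hn : n % 6 = 2)
    (h8 : 8 ≤ n) {m : ℕ} (hm : m = 0 ∨ m = 2 ∨ m = 4) :
    3 * ∑ j ∈ range (n + 1) with j % 6 = m,
        bernoulli j / j.factorial * (bernoulli (n - j) / (n - j).factorial)
      = -((n : ℚ) - 1) * (bernoulli n / n.factorial) := by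
  apply (algebraMap ℚ ℂ).injective
  simpa [bernoulliPowerSeries] using three_mul_sum_filter_mod_six_coeff_bernoulliPowerSeries
    (Complex.isPrimitiveRoot_exp 3 (by norm_num)) hn h8 hm

theorem choose_mul_bernoulli_mul_bernoulli {n j : ℕ} (hj : j ≤ n) :
    (n.choose j : ℚ) * bernoulli j * bernoulli (n - j)
      = n.factorial * (bernoulli j / j.factorial * (bernoulli (n - j) / (n - j).factorial)) := by
  rw [Nat.cast_choose ℚ hj]
  field_simp

theorem stmt10 (l : ℕ) (hl : 8 ≤ l) (h6 : l % 6 = 2) (m : ℕ)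
    (hm : m = 0 ∨ m = 2 ∨ m = 4) :
    ∑ j ∈ (Finset.range (l + 1)).filter (fun j => j % 6 = m),
      (l.choose j : ℚ) * bernoulli j * bernoulli (l - j)
      = -(((l : ℚ) - 1) / 3) * bernoulli l := by
  have h := three_mul_sum_filter_mod_six_bernoulli_div_factorial h6 hl hm
  rw [sum_congr rfl fun j hj => choose_mul_bernoulli_mul_bernoulli
    (Nat.lt_succ_iff.1 (mem_range.1 (mem_filter.1 hj).1)), ← mul_sum]
  have hfact : (l.factorial : ℚ) ≠ 0 := by positivity
  field_simp at h ⊢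
  linear_combination h
end

section
/- For every integer l ≥ 3, ∑_{l₁ ≥ 2, l₂ ≥ 1, l₁+l₂ = l} 2^{l₁−1} ζ(l₁, l₂) = ((l+1)/2)·ζ(l). -/
open scoped BigOperators
open Finset

/-! For `m₁ > m₂` the weighted sum `∑_{l₁} 2^(l₁-1) / (m₁^l₁ m₂^(l-l₁))` is a geometric sum in
`2 m₂ / m₁`. Off the line `m₁ = 2 m₂` it equals
`2 / (m₂^(l-2) m₁ (m₁ - 2 m₂)) - 2^(l-1) / (m₁^(l-1) (m₁ - 2 m₂))`;
on that line it is `(l-2)/2 · m₂^(-l)`. The second fraction changes sign under `m₂ ↦ m₁ - m₂`,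
so it sums to zero. For fixed `m₂ = n` the first one is `(2 / n^(l-2)) / (t² - n²)` with
`t = m₁ - n`, and partial fractions telescope `∑_{t ≠ n} 1 / (t² - n²)` to `3 / (4 n²)`; summing
over `n` gives `(3/2) ζ(l)`, and the diagonal adds `((l-2)/2) ζ(l)`. Absolute convergence of the
first fraction comes from the majorant `m₂^(-3/2) |m₁ - 2 m₂|^(-3/2)`. -/

open Filter Topology

namespace DoubleZeta

theorem sum_Icc_pow_mul_pow_mul_sub {K : Type*} [CommRing K] (x y : K) {l : ℕ} (hl : 2 ≤ l) :
    (∑ k ∈ Icc 2 (l - 1), x ^ k * y ^ (l - k)) * (x - y) = y * (x ^ l - y ^ (l - 2) * x ^ 2) := by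
  have hIcc : Icc 2 (l - 1) = Ico 2 l := by ext; simp only [mem_Icc, mem_Ico]; omega
  have hterm : ∀ k ∈ Ico 2 l, x ^ k * y ^ (l - k) = y * (x ^ k * y ^ (l - 1 - k)) := by
    intro k hk
    rw [mem_Ico] at hk
    rw [show l - k = l - 1 - k + 1 by omega, pow_succ]
    ring
  rw [hIcc, sum_congr rfl hterm, ← mul_sum, mul_assoc, (Commute.all x y).geom_sum₂_Ico_mul hl]

theorem hasSum_sub_nat_add {G : Type*} [AddCommGroup G] [TopologicalSpace G]
    [IsTopologicalAddGroup G] [T2Space G] {u : ℕ → G} (k : ℕ)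
    (hs : Summable fun t ↦ u t - u (t + k)) (hu : Tendsto u atTop (𝓝 0)) :
    HasSum (fun t ↦ u t - u (t + k)) (∑ i ∈ range k, u i) := by
  have hpartial : ∀ N, ∑ t ∈ range N, (u t - u (t + k))
      = ∑ i ∈ range k, u i - ∑ i ∈ range k, u (N + i) := by
    intro N
    have h₁ := sum_range_add u N k
    have h₂ := sum_range_add u k N
    rw [add_comm k N] at h₂
    simp only [sum_sub_distrib, add_comm _ k]
    rw [eq_sub_iff_add_eq, sub_add_eq_add_sub, sub_eq_iff_eq_add, ← h₁, h₂, add_comm]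
  rw [hs.hasSum_iff_tendsto_nat, funext hpartial]
  have htail : Tendsto (fun N ↦ ∑ i ∈ range k, u (N + i)) atTop (𝓝 0) := by
    simpa using tendsto_finsetSum (range k) fun i _ ↦ hu.comp (tendsto_add_atTop_nat i)
  simpa using tendsto_const_nhds.sub htail

theorem summable_one_div_add_one_pow {p : ℕ} (hp : 1 < p) :
    Summable fun t : ℕ ↦ 1 / ((t : ℝ) + 1) ^ p := by
  simpa using (summable_nat_add_iff 1).2 (Real.summable_one_div_nat_pow.2 hp)

theorem sum_range_one_div_sub (k : ℕ) :
    ∑ t ∈ range (2 * k + 2), 1 / ((t : ℝ) - k) = 1 / ((k : ℝ) + 1) := by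
  have hsymm : ∑ t ∈ range (2 * k + 1), 1 / ((t : ℝ) - k) = 0 := by
    have h := sum_range_reflect (fun t : ℕ ↦ 1 / ((t : ℝ) - k)) (2 * k + 1)
    have hneg : ∀ j ∈ range (2 * k + 1),
        1 / (((2 * k + 1 - 1 - j : ℕ) : ℝ) - k) = -(1 / ((j : ℝ) - k)) := by
      intro j hj
      rw [mem_range] at hj
      rw [show 2 * k + 1 - 1 - j = 2 * k - j by omega, Nat.cast_sub (by omega), ← div_neg]
      push_cast
      ring_nf
    rw [sum_congr rfl hneg, sum_neg_distrib, neg_eq_iff_add_eq_zero] at h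
    linarith
  rw [sum_range_succ, hsymm]
  push_cast
  ring_nf

theorem summable_one_div_sq_sub_sq (k : ℕ) :
    Summable fun t : ℕ ↦ 1 / (((t : ℝ) + 1) ^ 2 - ((k : ℝ) + 1) ^ 2) := by
  refine (summable_nat_add_iff (k + 1)).1 ((summable_one_div_add_one_pow one_lt_two).of_nonneg_of_le
    (fun t ↦ ?_) fun t ↦ ?_)
  all_goals
    have h : (((t + (k + 1) : ℕ) : ℝ) + 1) ^ 2 - ((k : ℝ) + 1) ^ 2
        = ((t : ℝ) + 1) * (t + 2 * k + 3) := by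
      push_cast; ring
    simp only [h]
  · positivity
  · exact one_div_le_one_div_of_le (by positivity) (by rw [sq]; gcongr; linarith; norm_num)

theorem hasSum_one_div_sq_sub_sq (k : ℕ) :
    HasSum (fun t : ℕ ↦ 1 / (((t : ℝ) + 1) ^ 2 - ((k : ℝ) + 1) ^ 2))
      (3 / (4 * ((k : ℝ) + 1) ^ 2)) := by
  set f : ℕ → ℝ := fun t ↦ 1 / (((t : ℝ) + 1) ^ 2 - ((k : ℝ) + 1) ^ 2)
  set u : ℕ → ℝ := fun t ↦ 1 / ((t : ℝ) - k)
  set s : ℕ → ℝ := fun t ↦ if t = k then 1 / (4 * ((k : ℝ) + 1) ^ 2) else 0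
  -- `u` has junk value `0` at `t = k`, where `f` vanishes too; `s` repairs the mismatch.
  have hdecomp : ∀ t, u t - u (t + (2 * k + 2)) = 2 * (k + 1) * (f t - s t) := by
    intro t
    simp only [u, f, s]
    by_cases ht : t = k
    · subst ht
      rw [if_pos rfl, sub_self, div_zero, sub_self, div_zero]
      push_cast
      field_simp
      ring
    · have ht' : (t : ℝ) - k ≠ 0 := sub_ne_zero.2 (by exact_mod_cast ht)
      rw [if_neg ht]
      have hden : ((t : ℝ) + 1) ^ 2 - ((k : ℝ) + 1) ^ 2 = (t - k) * (t + k + 2) := by ring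
      have hshift : ((t + (2 * k + 2) : ℕ) : ℝ) - k = t + k + 2 := by push_cast; ring
      have hpos : (t : ℝ) + k + 2 ≠ 0 := by positivity
      rw [hden, hshift]
      field_simp
      ring
  have hu : Tendsto u atTop (𝓝 0) :=
    tendsto_const_nhds.div_atTop (tendsto_atTop_add_const_right _ _ tendsto_natCast_atTop_atTop)
  have hs : Summable s := (hasSum_ite_eq k _).summable
  have htel := hasSum_sub_nat_add (u := u) (2 * k + 2)
    ((((summable_one_div_sq_sub_sq k).sub hs).mul_left (2 * ((k : ℝ) + 1))).congr fun t ↦ (hdecomp t).symm) hu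
  rw [show ∑ i ∈ range (2 * k + 2), u i = 1 / ((k : ℝ) + 1) from sum_range_one_div_sub k] at htel
  have hf_eq : f = fun t ↦ 1 / (2 * ((k : ℝ) + 1)) * (u t - u (t + (2 * k + 2))) + s t := by
    funext t
    rw [hdecomp]
    field_simp
    ring
  have h := (htel.mul_left (1 / (2 * ((k : ℝ) + 1)))).add
    (hasSum_ite_eq k (1 / (4 * ((k : ℝ) + 1) ^ 2)))
  rw [show 1 / (2 * ((k : ℝ) + 1)) * (1 / ((k : ℝ) + 1)) + 1 / (4 * ((k : ℝ) + 1) ^ 2)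
    = 3 / (4 * ((k : ℝ) + 1) ^ 2) by field_simp; ring] at h
  rw [hf_eq]
  exact h

theorem one_div_mul_mul_le_of_mul_le_sq {x y z : ℝ} (hx : 0 < x) (hy : 0 < y) (hz : 0 ≤ z)
    (h : x * y ≤ z ^ 2) :
    1 / (x * y * z) ≤ (x ^ (3 / 2 : ℝ))⁻¹ * (y ^ (3 / 2 : ℝ))⁻¹ := by
  have hsqrt : Real.sqrt (x * y) ≤ z := Real.sqrt_le_iff.2 ⟨hz, h⟩
  have hpow : x ^ (3 / 2 : ℝ) * y ^ (3 / 2 : ℝ) = x * y * Real.sqrt (x * y) := by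
    rw [← Real.mul_rpow hx.le hy.le, Real.sqrt_eq_rpow, show (3 / 2 : ℝ) = 1 + 1 / 2 by norm_num,
      Real.rpow_add (by positivity), Real.rpow_one]
  rw [← mul_inv, ← one_div, hpow]
  gcongr

theorem summable_inv_rpow_three_halves_mul :
    Summable fun p : ℕ × ℤ ↦ (((p.1 : ℝ) + 1) ^ (3 / 2 : ℝ))⁻¹ * (|(p.2 : ℝ)| ^ (3 / 2 : ℝ))⁻¹ := by
  have hnat : Summable fun a : ℕ ↦ (((a : ℝ) + 1) ^ (3 / 2 : ℝ))⁻¹ := by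
    simpa using
      (summable_nat_add_iff 1).2 (Real.summable_nat_rpow_inv.2 (by norm_num : (1 : ℝ) < 3 / 2))
  have hint : Summable fun d : ℤ ↦ (|(d : ℝ)| ^ (3 / 2 : ℝ))⁻¹ := by
    simpa [Real.rpow_neg (abs_nonneg _)] using
      Real.summable_abs_int_rpow (by norm_num : (1 : ℝ) < 3 / 2)
  exact hnat.mul_of_nonneg hint (fun _ ↦ by positivity) fun _ ↦ by positivity

/-- The pair `(a, b)` encodes the indices `m₁ = a + b + 2 > m₂ = a + 1` of a double zeta value. -/
def pairEquiv : ℕ × ℕ ≃ {q : ℕ+ × ℕ+ // q.2 < q.1} where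
  toFun p := ⟨(⟨p.1 + p.2 + 2, by omega⟩, ⟨p.1 + 1, by omega⟩), by
    change p.1 + 1 < p.1 + p.2 + 2; omega⟩
  invFun q := ((q.1.2 : ℕ) - 1, (q.1.1 : ℕ) - q.1.2 - 1)
  left_inv p := by
    ext <;> simp
    omega
  right_inv q := by
    have h₁ := q.1.2.pos
    have h₂ : (q.1.2 : ℕ) < q.1.1 := q.2
    ext <;> apply PNat.eq <;> simp <;> omega

noncomputable def dzetaTerm (l₁ l₂ : ℕ) (p : ℕ × ℕ) : ℝ :=
  1 / (((p.1 : ℝ) + p.2 + 2) ^ l₁ * ((p.1 : ℝ) + 1) ^ l₂)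

theorem two_pow_mul_dzetaTerm {l₁ : ℕ} (h₁ : 1 ≤ l₁) (l₂ a b : ℕ) :
    2 ^ (l₁ - 1) * dzetaTerm l₁ l₂ (a, b)
      = (2 / ((a : ℝ) + b + 2)) ^ l₁ * (1 / ((a : ℝ) + 1)) ^ l₂ / 2 := by
  obtain ⟨k, rfl⟩ : ∃ k, l₁ = k + 1 := ⟨l₁ - 1, by omega⟩
  simp only [dzetaTerm, div_pow, one_pow, Nat.add_sub_cancel, pow_succ]
  field_simp

theorem dzeta_eq_tsum (l₁ l₂ : ℕ) : dzeta l₁ l₂ = ∑' p, dzetaTerm l₁ l₂ p := by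
  rw [dzeta, ← pairEquiv.tsum_eq]
  refine tsum_congr fun p ↦ ?_
  simp [pairEquiv, dzetaTerm]

theorem zetav_eq_tsum (l : ℕ) : zetav l = ∑' a : ℕ, 1 / ((a : ℝ) + 1) ^ l := by
  rw [zetav, tsum_pnat_eq_tsum_succ (f := fun n : ℕ ↦ 1 / (n : ℝ) ^ l)]
  push_cast
  rfl

/-! `mainPart` and `oddPart` take the junk value `1 / 0 = 0` on the diagonal `a = b`
(that is, `m₁ = 2 m₂`), which `diagPart` accounts for separately. -/

noncomputable def mainPart (l : ℕ) (p : ℕ × ℕ) : ℝ :=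
  2 / (((p.1 : ℝ) + 1) ^ (l - 2) * (((p.2 : ℝ) + 1) ^ 2 - ((p.1 : ℝ) + 1) ^ 2))

noncomputable def oddPart (l : ℕ) (p : ℕ × ℕ) : ℝ :=
  2 ^ (l - 1) / (((p.1 : ℝ) + p.2 + 2) ^ (l - 1) * ((p.2 : ℝ) - p.1))

noncomputable def diagPart (l : ℕ) (p : ℕ × ℕ) : ℝ :=
  if p.1 = p.2 then ((l : ℝ) - 2) / 2 / ((p.1 : ℝ) + 1) ^ l else 0

theorem sum_two_pow_mul_dzetaTerm {l : ℕ} (hl : 2 ≤ l) (p : ℕ × ℕ) :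
    ∑ l₁ ∈ Icc 2 (l - 1), 2 ^ (l₁ - 1) * dzetaTerm l₁ (l - l₁) p
      = mainPart l p - oddPart l p + diagPart l p := by
  obtain ⟨a, b⟩ := p
  rw [sum_congr rfl fun l₁ hl₁ ↦ two_pow_mul_dzetaTerm (by rw [mem_Icc] at hl₁; omega) _ a b,
    ← sum_div]
  set m : ℝ := a + b + 2
  set n : ℝ := a + 1
  have hm : m ≠ 0 := by positivity
  have hn : n ≠ 0 := by positivity
  obtain ⟨j, rfl⟩ : ∃ j, l = j + 2 := ⟨l - 2, by omega⟩
  by_cases hab : a = b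
  · subst hab
    have hxy : 2 / m = 1 / n := by simp only [m, n]; field_simp; ring
    simp only [mainPart, oddPart, diagPart, hxy, ← pow_add, sub_self, mul_zero, div_zero, if_pos]
    have hexp : ∀ l₁ ∈ Icc 2 (j + 2 - 1), (1 / n) ^ (l₁ + (j + 2 - l₁)) = (1 / n) ^ (j + 2) := by
      intro l₁ hl₁
      rw [mem_Icc] at hl₁
      rw [Nat.add_sub_cancel' (by omega)]
    rw [sum_congr rfl hexp, sum_const, Nat.card_Icc, nsmul_eq_mul]
    simp only [n]
    push_cast
    rw [div_pow, one_pow]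
    ring
  · set d : ℝ := b - a
    have hd : d ≠ 0 := sub_ne_zero.2 (by exact_mod_cast Ne.symm hab)
    have hmd : m = 2 * n + d := by simp only [m, n, d]; ring
    have hxy : 2 / m - 1 / n = -d / (m * n) := by rw [div_sub_div _ _ hm hn, hmd]; ring
    have hsq : ((b : ℝ) + 1) ^ 2 - ((a : ℝ) + 1) ^ 2 = d * m := by simp only [m, d]; ring
    have hgeom := sum_Icc_pow_mul_pow_mul_sub (2 / m) (1 / n) (l := j + 2) (by omega)
    rw [eq_div_of_mul_eq (by rw [hxy]; simp [hd, hm, hn]) hgeom, mainPart, oddPart, diagPart,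
      if_neg hab, hsq, add_zero, hxy, show j + 2 - 2 = j by omega, show j + 2 - 1 = j + 1 by omega]
    change _ = 2 / (n ^ j * (d * m)) - 2 ^ (j + 1) / (m ^ (j + 1) * d)
    simp only [div_pow, one_pow]
    field_simp
    rw [hmd]
    ring

theorem summable_dzetaTerm {l₁ l₂ : ℕ} (h₁ : 2 ≤ l₁) (h₂ : 1 ≤ l₂) :
    Summable (dzetaTerm l₁ l₂) := by
  have hι : Function.Injective fun p : ℕ × ℕ ↦ (p.1, (p.2 : ℤ) + 1) := by
    intro p q h
    simp only [Prod.mk.injEq, add_left_inj, Nat.cast_inj] at h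
    exact Prod.ext h.1 h.2
  refine Summable.of_norm_bounded (summable_inv_rpow_three_halves_mul.comp_injective hι)
    fun ⟨a, b⟩ ↦ ?_
  have hx : (1 : ℝ) ≤ a + 1 := by linarith [(a.cast_nonneg : (0 : ℝ) ≤ a)]
  have hy : (0 : ℝ) < b + 1 := by positivity
  have hm : (1 : ℝ) ≤ a + b + 2 := by linarith [(b.cast_nonneg : (0 : ℝ) ≤ b)]
  have hym : (b : ℝ) + 1 ≤ a + b + 2 := by linarith [(a.cast_nonneg : (0 : ℝ) ≤ a)]
  have hxm : (a : ℝ) + 1 ≤ a + b + 2 := by linarith [(b.cast_nonneg : (0 : ℝ) ≤ b)]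
  have hden : ((a : ℝ) + 1) * (b + 1) * (a + b + 2) ≤ ((a : ℝ) + b + 2) ^ l₁ * ((a : ℝ) + 1) ^ l₂ :=
    calc ((a : ℝ) + 1) * (b + 1) * (a + b + 2) ≤ (a + b + 2) ^ 2 * (a + 1) := by
          nlinarith [mul_le_mul_of_nonneg_left hym
            (by positivity : (0 : ℝ) ≤ (a + 1) * (a + b + 2))]
      _ ≤ (a + b + 2) ^ l₁ * (a + 1) ^ l₂ :=
        mul_le_mul (pow_le_pow_right₀ hm h₁) (le_self_pow₀ hx (by omega)) (by positivity)
          (by positivity)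
  have hbound := one_div_mul_mul_le_of_mul_le_sq (by positivity) hy (by positivity)
    (mul_le_mul hxm hym hy.le (by positivity) |>.trans_eq (sq _).symm)
  simp only [Function.comp_apply, Int.cast_add, Int.cast_natCast, Int.cast_one]
  rw [abs_of_pos hy, Real.norm_of_nonneg (by unfold dzetaTerm; positivity)]
  exact (one_div_le_one_div_of_le (by positivity) hden).trans hbound

theorem hasSum_sum_two_pow_mul_dzetaTerm {l : ℕ} (hl : 2 ≤ l) :
    HasSum (fun p ↦ ∑ l₁ ∈ Icc 2 (l - 1), 2 ^ (l₁ - 1) * dzetaTerm l₁ (l - l₁) p)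
      (∑ l₁ ∈ Icc 2 (l - 1), 2 ^ (l₁ - 1) * dzeta l₁ (l - l₁)) :=
  hasSum_sum fun l₁ hl₁ ↦ by
    rw [mem_Icc] at hl₁
    rw [dzeta_eq_tsum]
    exact (summable_dzetaTerm (l₂ := l - l₁) hl₁.1 (by omega)).hasSum.mul_left _

theorem summable_mainPart {l : ℕ} (hl : 3 ≤ l) : Summable (mainPart l) := by
  have hι : Function.Injective fun p : ℕ × ℕ ↦ (p.1, (p.2 : ℤ) - p.1) := by
    intro p q h
    simp only [Prod.mk.injEq] at h
    obtain ⟨h₁, h₂⟩ := h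
    rw [h₁, sub_left_inj, Nat.cast_inj] at h₂
    exact Prod.ext h₁ h₂
  refine Summable.of_norm_bounded
    ((summable_inv_rpow_three_halves_mul.comp_injective hι).mul_left 2) fun ⟨a, b⟩ ↦ ?_
  simp only [Function.comp_apply, Int.cast_sub, Int.cast_natCast, Real.norm_eq_abs]
  set d : ℝ := b - a
  set m : ℝ := a + b + 2
  have ha : (0 : ℝ) ≤ a := a.cast_nonneg
  have hb : (0 : ℝ) ≤ b := b.cast_nonneg
  have hsq : ((b : ℝ) + 1) ^ 2 - ((a : ℝ) + 1) ^ 2 = d * m := by simp only [d, m]; ring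
  by_cases hd : d = 0
  · rw [mainPart, hsq, hd, zero_mul, mul_zero, div_zero, abs_zero]
    positivity
  have hx : (1 : ℝ) ≤ a + 1 := by linarith
  have hdm : |d| ≤ m := abs_le.2 ⟨by simp only [d, m]; linarith, by simp only [d, m]; linarith⟩
  have hxm : (a : ℝ) + 1 ≤ m := by simp only [m]; linarith
  have hbound := one_div_mul_mul_le_of_mul_le_sq (by positivity) (abs_pos.2 hd) (by positivity)
    (mul_le_mul hxm hdm (abs_nonneg d) (by positivity) |>.trans_eq (sq m).symm)
  rw [mainPart, hsq, abs_div, abs_mul, abs_mul, abs_two, abs_of_pos (by positivity : (0 : ℝ) < m),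
    abs_of_pos (by positivity : (0 : ℝ) < ((a : ℝ) + 1) ^ (l - 2)), div_eq_mul_one_div 2]
  gcongr
  refine le_trans (one_div_le_one_div_of_le (by positivity) ?_) hbound
  rw [mul_assoc]
  gcongr
  exact le_self_pow₀ hx (by omega)

theorem hasSum_mainPart {l : ℕ} (hl : 3 ≤ l) : HasSum (mainPart l) (3 / 2 * zetav l) := by
  have hfiber : ∀ a : ℕ, HasSum (fun b ↦ mainPart l (a, b)) (3 / 2 * (1 / ((a : ℝ) + 1) ^ l)) := by
    intro a
    have hpow : ((a : ℝ) + 1) ^ (l - 2) * ((a : ℝ) + 1) ^ 2 = ((a : ℝ) + 1) ^ l := by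
      rw [← pow_add, Nat.sub_add_cancel (by omega)]
    have h := (hasSum_one_div_sq_sub_sq a).mul_left (2 / ((a : ℝ) + 1) ^ (l - 2))
    rw [show 2 / ((a : ℝ) + 1) ^ (l - 2) * (3 / (4 * ((a : ℝ) + 1) ^ 2))
      = 3 / 2 * (1 / ((a : ℝ) + 1) ^ l) by rw [← hpow]; field_simp; ring] at h
    simpa only [mainPart, mul_one_div, div_div] using h
  have hzeta : HasSum (fun a : ℕ ↦ 3 / 2 * (1 / ((a : ℝ) + 1) ^ l)) (3 / 2 * zetav l) := by
    rw [zetav_eq_tsum]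
    exact (summable_one_div_add_one_pow (by omega)).hasSum.mul_left _
  have hsum := summable_mainPart hl
  rw [← (hsum.hasSum.prod_fiberwise hfiber).unique hzeta]
  exact hsum.hasSum

theorem hasSum_diagPart {l : ℕ} (hl : 2 ≤ l) : HasSum (diagPart l) ((l - 2) / 2 * zetav l) := by
  have hdiag : Function.Injective fun a : ℕ ↦ (a, a) := fun a b h ↦ (Prod.mk.inj h).1
  refine (hdiag.hasSum_iff (f := diagPart l)
    fun p hp ↦ if_neg fun h ↦ hp ⟨p.1, Prod.ext rfl h⟩).1 ?_
  rw [zetav_eq_tsum]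
  simpa only [Function.comp_def, diagPart, if_pos, mul_one_div] using
    (summable_one_div_add_one_pow (by omega)).hasSum.mul_left (((l : ℝ) - 2) / 2)

theorem oddPart_swap (l : ℕ) (p : ℕ × ℕ) : oddPart l p.swap = -oddPart l p := by
  rw [oddPart, oddPart, ← div_neg, ← mul_neg, neg_sub]
  congr 3
  simp only [Prod.fst_swap, Prod.snd_swap]
  ring

theorem tsum_oddPart (l : ℕ) : ∑' p, oddPart l p = 0 := by
  have h := (Equiv.prodComm ℕ ℕ).tsum_eq (oddPart l)
  simp only [Equiv.prodComm_apply, oddPart_swap, tsum_neg] at h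
  linarith

theorem hasSum_oddPart {l : ℕ} (hl : 3 ≤ l) : HasSum (oddPart l) 0 := by
  have hsum : Summable (oddPart l) :=
    (((summable_mainPart hl).add (hasSum_diagPart (l := l) (by omega)).summable).sub
      (hasSum_sum_two_pow_mul_dzetaTerm (l := l) (by omega)).summable).congr fun p ↦ by
        rw [sum_two_pow_mul_dzetaTerm (l := l) (by omega)]
        ring
  simpa [tsum_oddPart] using hsum.hasSum

end DoubleZeta

theorem stmt12 (l : ℕ) (hl : 3 ≤ l) :
    ∑ l₁ ∈ Finset.Icc 2 (l - 1), (2 : ℝ) ^ (l₁ - 1) * dzeta l₁ (l - l₁)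
      = (((l : ℝ) + 1) / 2) * zetav l := by
  open DoubleZeta in
  have hparts :=
    ((hasSum_mainPart hl).sub (hasSum_oddPart hl)).add (hasSum_diagPart (l := l) (by omega))
  simp only [← sum_two_pow_mul_dzetaTerm (by omega : 2 ≤ l)] at hparts
  rw [(hasSum_sum_two_pow_mul_dzetaTerm (by omega)).unique hparts]
  ring
end

section
/- Let ω = e^{2πi/3} and l ≥ 3 an integer. Then ∑_{x ∈ {1, ω, ω²}} T_l(x+1, 1) = 3·∑_{l₁ ≡ 1 (mod 3)} (−1)^{l₁−1} ζ(l₁, l₂) + ((l+1)/2)·ζ(l) − T_l(−1, 1), where all sums run over l₁ ≥ 2, l₂ ≥ 1 with l₁ + l₂ = l. -/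
open scoped BigOperators
open Finset

/-!
Put `m₁ = x + y` and `m₂ = x`. The summand of `∑ₐ 2^(a-1) ζ(a, l-a)` is then a geometric sum
in `2x / (x + y)`, and for `y ≠ x` it equals
`(1/(y-x) - 1/(y+x)) / x^(l-1) - 2^(l-1) / ((x+y)^(l-1) (y-x))`.
The second term is antisymmetric in `x, y` and absolutely summable, so it sums to zero. Along a
row `x`, the first term telescopes with shift `2x`; together with the diagonal value
`(l-2) / (2x^l)` the row sums to `(l+1) / (2x^l)`. This gives the Ohno–Zudilin formula
`∑ₐ 2^(a-1) ζ(a, l-a) = (l+1)/2 · ζ(l)`.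

The theorem then reduces to an identity between coefficients: `ω + 1 = -ω²` and `ω² + 1 = -ω`, so
`2^k + (ω+1)^k + (ω²+1)^k = 2^k + (-1)^k (ω^k + ω^(2k))`, and `1 + ω^k + ω^(2k)` is `3` if
`3 ∣ k` and `0` otherwise.
-/

open Filter Topology

-- The summand of `∑ₐ 2^(a-1) ζ(a, l-a)` at `m₁ = x + y`, `m₂ = x`.
noncomputable def weightedSummand (l : ℕ) (x y : ℝ) : ℝ :=
  ∑ a ∈ Icc 2 (l - 1), 2 ^ (a - 1) / ((x + y) ^ a * x ^ (l - a))

-- Vanishes on the diagonal only through the convention `a / 0 = 0`.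
noncomputable def skewTerm (l : ℕ) (x y : ℝ) : ℝ :=
  2 ^ (l - 1) / ((x + y) ^ (l - 1) * (y - x))

theorem skewTerm_swap (l : ℕ) (x y : ℝ) : skewTerm l y x = -skewTerm l x y := by
  rw [skewTerm, skewTerm, add_comm, ← neg_sub, mul_neg, div_neg]

theorem skewTerm_self (l : ℕ) (x : ℝ) : skewTerm l x x = 0 := by
  simp [skewTerm]

theorem two_pow_div_add_pow_mul_pow {l a : ℕ} (ha : 1 ≤ a) (hal : a ≤ l) {x y : ℝ}
    (hx : x ≠ 0) (hxy : x + y ≠ 0) :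
    2 ^ (a - 1) / ((x + y) ^ a * x ^ (l - a)) = (2 * x / (x + y)) ^ a / (2 * x ^ l) := by
  obtain ⟨b, rfl⟩ := Nat.exists_eq_add_of_le hal
  obtain ⟨c, rfl⟩ := Nat.exists_eq_add_of_le ha
  rw [show 1 + c + b - (1 + c) = b by omega, show 1 + c - 1 = c by omega, div_pow, mul_pow]
  field_simp
  ring

theorem weightedSummand_self {l : ℕ} (hl : 2 ≤ l) {x : ℝ} (hx : x ≠ 0) :
    weightedSummand l x x = (l - 2) / (2 * x ^ l) := by
  have hterm : ∀ a ∈ Icc 2 (l - 1), 2 ^ (a - 1) / ((x + x) ^ a * x ^ (l - a)) = 1 / (2 * x ^ l) := by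
    intro a ha
    rw [mem_Icc] at ha
    rw [two_pow_div_add_pow_mul_pow (by omega) (by omega) hx (by simpa [← two_mul] using hx),
      show 2 * x / (x + x) = 1 by field_simp; ring, one_pow]
  rw [weightedSummand, sum_congr rfl hterm, sum_const, Nat.card_Icc, nsmul_eq_mul,
    show l - 1 + 1 - 2 = l - 2 by omega, Nat.cast_sub hl]
  field_simp
  push_cast
  ring

theorem weightedSummand_add_skewTerm {l : ℕ} (hl : 2 ≤ l) {x y : ℝ} (hx : 0 < x) (hy : 0 < y)
    (hxy : y ≠ x) :
    weightedSummand l x y + skewTerm l x y = (1 / (y - x) - 1 / (y + x)) / x ^ (l - 1) := by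
  have hs : x + y ≠ 0 := by positivity
  have hxy' : x - y ≠ 0 := sub_ne_zero.2 hxy.symm
  have hr : 2 * x / (x + y) - 1 = (x - y) / (x + y) := by field_simp; ring
  have hgeom := geom_sum_Ico_mul (2 * x / (x + y)) hl
  rw [hr] at hgeom
  rw [weightedSummand, show Icc 2 (l - 1) = Ico 2 l by ext; simp; omega]
  rw [sum_congr rfl fun a ha ↦ two_pow_div_add_pow_mul_pow (by simp at ha; omega)
    (by simp at ha; omega) hx.ne' hs, ← sum_div, eq_div_of_mul_eq (div_ne_zero hxy' hs) hgeom]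
  obtain ⟨k, rfl⟩ := Nat.exists_eq_add_of_le hl
  rw [skewTerm, show 2 + k - 1 = k + 1 by omega]
  have hyx : y - x ≠ 0 := sub_ne_zero.2 hxy
  simp only [div_pow, mul_pow]
  field_simp
  ring

theorem mul_sqrt_eq_rpow {t : ℝ} (ht : 0 ≤ t) : t * √t = t ^ (3 / 2 : ℝ) := by
  rw [Real.sqrt_eq_rpow, show (3 / 2 : ℝ) = 1 + 1 / 2 by norm_num,
    Real.rpow_add' ht (by norm_num), Real.rpow_one]

theorem summable_one_div_mul_sqrt_nat : Summable fun n : ℕ ↦ 1 / ((n : ℝ) * √n) := by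
  simpa [mul_sqrt_eq_rpow] using Real.summable_one_div_nat_rpow.2 (by norm_num : (1 : ℝ) < 3 / 2)

theorem summable_one_div_mul_sqrt_int : Summable fun j : ℤ ↦ 1 / (|(j : ℝ)| * √|(j : ℝ)|) := by
  simpa [mul_sqrt_eq_rpow, Real.rpow_neg] using
    Real.summable_abs_int_rpow (by norm_num : (1 : ℝ) < 3 / 2)

theorem one_div_add_pow_mul_pow_le {a b : ℕ} (ha : 2 ≤ a) (hb : 1 ≤ b) {x y : ℝ} (hx : 1 ≤ x)
    (hy : 0 < y) : 1 / ((x + y) ^ a * x ^ b) ≤ 1 / (x * √x) * (1 / (y * √y)) := by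
  rw [one_div_mul_one_div]
  apply one_div_le_one_div_of_le (by positivity)
  have hsqrt : √x * √y ≤ x + y := by
    nlinarith [Real.sq_sqrt (by linarith : 0 ≤ x), Real.sq_sqrt hy.le,
      sq_nonneg (√x - √y)]
  calc x * √x * (y * √y) = x * (y * (√x * √y)) := by ring
    _ ≤ x * ((x + y) * (x + y)) := by gcongr; linarith
    _ = (x + y) ^ 2 * x ^ 1 := by ring
    _ ≤ (x + y) ^ a * x ^ b := by gcongr; linarith

theorem abs_skewTerm_le {l : ℕ} (hl : 3 ≤ l) {x y : ℝ} (hx : 0 < x) (hy : 0 < y)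
    (hxy : 1 ≤ x + y) :
    |skewTerm l x y| ≤ 2 ^ (l - 1) * (1 / ((x + y) * √(x + y)) * (1 / (|y - x| * √|y - x|))) := by
  rcases eq_or_ne y x with rfl | hne
  · rw [skewTerm_self, abs_zero]; positivity
  have ht : 0 < |y - x| := abs_pos.2 (sub_ne_zero.2 hne)
  have hts : |y - x| ≤ x + y := abs_sub_le_iff.2 ⟨by linarith, by linarith⟩
  rw [skewTerm, abs_div, abs_mul, abs_of_pos (by positivity : (0 : ℝ) < 2 ^ (l - 1)),
    abs_of_pos (by positivity : 0 < (x + y) ^ (l - 1)), one_div_mul_one_div, ← div_eq_mul_one_div]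
  apply div_le_div_of_nonneg_left (by positivity) (by positivity)
  have hsqrt : √(x + y) * √|y - x| ≤ x + y := by
    calc √(x + y) * √|y - x| ≤ √(x + y) * √(x + y) := by gcongr
      _ = x + y := Real.mul_self_sqrt (by positivity)
  calc (x + y) * √(x + y) * (|y - x| * √|y - x|) = (x + y) * (√(x + y) * √|y - x|) * |y - x| := by
        ring
    _ ≤ (x + y) * (x + y) * |y - x| := by gcongr
    _ = (x + y) ^ 2 * |y - x| := by ring
    _ ≤ (x + y) ^ (l - 1) * |y - x| := by gcongr; omega

theorem summable_one_div_add_pow_mul_pow {a b : ℕ} (ha : 2 ≤ a) (hb : 1 ≤ b) :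
    Summable fun p : ℕ × ℕ ↦ 1 / (((p.1 : ℝ) + 1 + ((p.2 : ℝ) + 1)) ^ a * ((p.1 : ℝ) + 1) ^ b) := by
  have hshift : Summable fun n : ℕ ↦ 1 / (((n : ℝ) + 1) * √((n : ℝ) + 1)) := by
    simpa using (summable_nat_add_iff 1).2 summable_one_div_mul_sqrt_nat
  exact Summable.of_nonneg_of_le (fun p ↦ by positivity)
    (fun p ↦ one_div_add_pow_mul_pow_le ha hb (by simp) (by positivity))
    (hshift.mul_of_nonneg hshift (fun n ↦ by positivity) (fun n ↦ by positivity))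

theorem summable_skewTerm {l : ℕ} (hl : 3 ≤ l) :
    Summable fun p : ℕ × ℕ ↦ skewTerm l ((p.1 : ℝ) + 1) ((p.2 : ℝ) + 1) := by
  have hshift : Summable fun n : ℕ ↦ 1 / (((n : ℝ) + 2) * √((n : ℝ) + 2)) := by
    simpa using (summable_nat_add_iff 2).2 summable_one_div_mul_sqrt_nat
  have hprod := hshift.mul_of_nonneg summable_one_div_mul_sqrt_int
    (fun n ↦ by positivity) (fun j ↦ by positivity)
  -- in the coordinates `(x + y, y - x)` the bound of `abs_skewTerm_le` is a product
  have hinj : Function.Injective fun p : ℕ × ℕ ↦ (p.1 + p.2, (p.2 : ℤ) - p.1) := by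
    intro p q h
    simp only [Prod.mk.injEq] at h
    ext <;> omega
  refine Summable.of_norm_bounded ((hprod.comp_injective hinj).mul_left (2 ^ (l - 1)))
    fun p ↦ ?_
  rw [Real.norm_eq_abs]
  convert abs_skewTerm_le hl (x := (p.1 : ℝ) + 1) (y := (p.2 : ℝ) + 1) (by positivity)
    (by positivity) (by linarith [p.1.cast_nonneg (α := ℝ), p.2.cast_nonneg (α := ℝ)]) using 2
  simp only [Function.comp, Nat.cast_add, Int.cast_sub, Int.cast_natCast]
  ring_nf

def natProdEquivPNatLt : ℕ × ℕ ≃ {q : ℕ+ × ℕ+ // q.2 < q.1} where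
  toFun p := ⟨(⟨p.1 + p.2 + 2, by omega⟩, ⟨p.1 + 1, by omega⟩), by rw [← PNat.coe_lt_coe]; simp⟩
  invFun q := ((q.1.2 : ℕ) - 1, (q.1.1 : ℕ) - q.1.2 - 1)
  left_inv := by
    rintro ⟨n, d⟩
    simp only [PNat.mk_coe, Prod.mk.injEq]
    omega
  right_inv := by
    rintro ⟨⟨m₁, m₂⟩, h⟩
    have h₁ := m₂.pos
    have h₂ : (m₂ : ℕ) < m₁ := h
    apply Subtype.ext
    apply Prod.ext <;> apply PNat.coe_injective <;> simp <;> omega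

theorem dzeta_eq_tsum (a b : ℕ) :
    dzeta a b = ∑' p : ℕ × ℕ, 1 / (((p.1 : ℝ) + 1 + ((p.2 : ℝ) + 1)) ^ a * ((p.1 : ℝ) + 1) ^ b) := by
  rw [dzeta, ← natProdEquivPNatLt.tsum_eq]
  congr! 1 with p
  simp only [natProdEquivPNatLt, Equiv.coe_fn_mk, PNat.mk_coe]
  push_cast
  ring_nf

theorem zetav_eq_tsum (l : ℕ) : zetav l = ∑' n : ℕ, 1 / ((n : ℝ) + 1) ^ l := by
  rw [zetav, tsum_pnat_eq_tsum_succ (f := fun n ↦ 1 / (n : ℝ) ^ l)]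
  push_cast
  rfl

theorem hasSum_sub_shift_of_tendsto_zero {G : Type*} [AddCommGroup G] [TopologicalSpace G]
    [IsTopologicalAddGroup G] [T2Space G] {u : ℕ → G} (hu : Tendsto u atTop (𝓝 0)) (k : ℕ)
    (hs : Summable fun d ↦ u d - u (d + k)) :
    HasSum (fun d ↦ u d - u (d + k)) (∑ j ∈ range k, u j) := by
  set v : ℕ → G := fun d ↦ ∑ j ∈ range k, u (d + j)
  have hv : ∀ d, u d - u (d + k) = v d - v (d + 1) := by
    intro d
    have h := sum_range_succ' (fun j ↦ u (d + j)) k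
    rw [sum_range_succ] at h
    simp only [add_zero, ← add_assoc, add_right_comm d _ 1] at h
    rw [sub_eq_sub_iff_add_eq_add, add_comm, ← h]
  have hv0 : Tendsto v atTop (𝓝 0) := by
    simpa using tendsto_finsetSum (range k) fun j _ ↦ hu.comp (tendsto_add_atTop_nat j)
  rw [hs.hasSum_iff_tendsto_nat]
  simp_rw [hv, sum_range_sub']
  simpa [v] using tendsto_const_nhds.sub hv0

theorem sum_range_one_div_sub (n : ℕ) :
    ∑ d ∈ range (2 * n + 2), 1 / ((d : ℝ) - n) = 1 / (n + 1) := by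
  -- the terms with `d ≤ 2n` cancel under `d ↦ 2n - d`
  have hodd : ∑ d ∈ range (2 * n + 1), 1 / ((d : ℝ) - n) = 0 := by
    have h := sum_range_reflect (fun d : ℕ ↦ 1 / ((d : ℝ) - n)) (2 * n + 1)
    have hneg : ∑ d ∈ range (2 * n + 1), 1 / (((2 * n + 1 - 1 - d : ℕ) : ℝ) - n)
        = -∑ d ∈ range (2 * n + 1), 1 / ((d : ℝ) - n) := by
      rw [← sum_neg_distrib]
      refine sum_congr rfl fun d hd ↦ ?_
      rw [mem_range] at hd
      rw [Nat.cast_sub (by omega), ← one_div_neg_eq_neg_one_div]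
      push_cast
      ring_nf
    linarith
  rw [sum_range_succ, hodd]
  push_cast
  ring_nf

theorem tsum_eq_zero_of_swap_eq_neg {α : Type*} {f : α × α → ℝ} (hf : ∀ p, f p.swap = -f p) :
    ∑' p, f p = 0 := by
  have h := (Equiv.prodComm α α).tsum_eq f
  simp only [Equiv.prodComm_apply, hf, tsum_neg] at h
  linarith

theorem hasSum_weightedSummand_add_skewTerm {l : ℕ} (hl : 2 ≤ l) (n : ℕ)
    (hs : Summable fun d : ℕ ↦ weightedSummand l (n + 1) (d + 1) + skewTerm l (n + 1) (d + 1)) :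
    HasSum (fun d : ℕ ↦ weightedSummand l (n + 1) (d + 1) + skewTerm l (n + 1) (d + 1))
      ((l + 1) / (2 * ((n : ℝ) + 1) ^ l)) := by
  set x : ℝ := n + 1 with hx
  have hx0 : 0 < x := by positivity
  have hxl : x ^ l = x ^ (l - 1) * x := by rw [← pow_succ, Nat.sub_add_cancel (by omega)]
  set u : ℕ → ℝ := fun d ↦ 1 / ((d : ℝ) - n)
  have hrow : (fun d : ℕ ↦ weightedSummand l x (d + 1) + skewTerm l x (d + 1))
      = fun d ↦ (u d - u (d + (2 * n + 2))) / x ^ (l - 1)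
          + if d = n then (l - 1) / (2 * x ^ l) else 0 := by
    funext d
    rcases eq_or_ne d n with rfl | hne
    · rw [hx, skewTerm_self, weightedSummand_self hl (by positivity), ← hx, if_pos rfl, hxl]
      simp only [u]
      push_cast
      field_simp
      ring
    · have hne' : (d : ℝ) + 1 ≠ x := by simpa [hx] using hne
      rw [weightedSummand_add_skewTerm hl hx0 (by positivity) hne', if_neg hne, add_zero]
      simp only [u, hx]
      push_cast
      ring_nf
  have hu : Tendsto u atTop (𝓝 0) :=
    (tendsto_atTop_add_const_right _ (-(n : ℝ)) tendsto_natCast_atTop_atTop).inv_tendsto_atTop.congr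
      fun d ↦ by simp [u, sub_eq_add_neg]
  rw [hrow] at hs ⊢
  have hdiff : Summable fun d ↦ u d - u (d + (2 * n + 2)) := by
    have := (hs.sub (hasSum_ite_eq n ((l - 1) / (2 * x ^ l) : ℝ)).summable).mul_right (x ^ (l - 1))
    refine this.congr fun d ↦ ?_
    field_simp
    ring
  have hval : (∑ j ∈ range (2 * n + 2), u j) / x ^ (l - 1) + (l - 1) / (2 * x ^ l)
      = (l + 1) / (2 * x ^ l) := by
    rw [sum_range_one_div_sub, ← hx, hxl]
    field_simp
    ring
  exact hval ▸ ((hasSum_sub_shift_of_tendsto_zero hu _ hdiff).div_const (x ^ (l - 1))).add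
    (hasSum_ite_eq n _)

theorem sum_two_pow_mul_dzeta {l : ℕ} (hl : 3 ≤ l) :
    ∑ a ∈ Icc 2 (l - 1), 2 ^ (a - 1) * dzeta a (l - a) = (l + 1) / 2 * zetav l := by
  have hterm : ∀ a ∈ Icc 2 (l - 1), Summable fun p : ℕ × ℕ ↦
      2 ^ (a - 1) / (((p.1 : ℝ) + 1 + ((p.2 : ℝ) + 1)) ^ a * ((p.1 : ℝ) + 1) ^ (l - a)) := by
    intro a ha
    rw [mem_Icc] at ha
    simpa only [mul_one_div] using
      (summable_one_div_add_pow_mul_pow ha.1 (by omega : 1 ≤ l - a)).mul_left (2 ^ (a - 1))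
  have hF : Summable fun p : ℕ × ℕ ↦ weightedSummand l (p.1 + 1) (p.2 + 1) := summable_sum hterm
  have hG := summable_skewTerm hl
  calc ∑ a ∈ Icc 2 (l - 1), 2 ^ (a - 1) * dzeta a (l - a)
      = ∑' p : ℕ × ℕ, weightedSummand l (p.1 + 1) (p.2 + 1) := by
        simp only [dzeta_eq_tsum, ← tsum_mul_left, mul_one_div, weightedSummand]
        exact (Summable.tsum_finsetSum hterm).symm
    _ = ∑' p : ℕ × ℕ, (weightedSummand l (p.1 + 1) (p.2 + 1) + skewTerm l (p.1 + 1) (p.2 + 1)) := by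
        rw [hF.tsum_add hG, tsum_eq_zero_of_swap_eq_neg (f := fun p : ℕ × ℕ ↦
          skewTerm l (p.1 + 1) (p.2 + 1)) fun p ↦ skewTerm_swap l _ _, add_zero]
    _ = ∑' n : ℕ, (l + 1) / 2 * (1 / ((n : ℝ) + 1) ^ l) := by
        rw [(hF.add hG).tsum_prod' (hF.add hG).prod_factor]
        refine tsum_congr fun n ↦ ?_
        rw [(hasSum_weightedSummand_add_skewTerm (by omega) n ((hF.add hG).prod_factor n)).tsum_eq]
        ring
    _ = (l + 1) / 2 * zetav l := by rw [tsum_mul_left, zetav_eq_tsum]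

theorem isPrimitiveRoot_omega : IsPrimitiveRoot omega 3 := by
  simpa [omega] using Complex.isPrimitiveRoot_exp 3 (by norm_num)

theorem one_add_omega_pow_add_sq (k : ℕ) :
    1 + omega ^ k + (omega ^ k) ^ 2 = if 3 ∣ k then 3 else 0 := by
  have hcube : (omega ^ k) ^ 3 = 1 := by
    rw [← pow_mul, mul_comm, pow_mul, isPrimitiveRoot_omega.pow_eq_one, one_pow]
  split_ifs with hk
  · rw [(isPrimitiveRoot_omega.pow_eq_one_iff_dvd k).2 hk]; norm_num
  · have hne : omega ^ k - 1 ≠ 0 :=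
      sub_ne_zero.2 fun h ↦ hk ((isPrimitiveRoot_omega.pow_eq_one_iff_dvd k).1 h)
    apply mul_left_cancel₀ hne
    linear_combination hcube

theorem two_pow_add_omega_add_one_pow (k : ℕ) :
    (1 + 1 : ℂ) ^ k + (omega + 1) ^ k + (omega ^ 2 + 1) ^ k
      = 2 ^ k + (if 3 ∣ k then 3 else 0) * (-1) ^ k - (-1) ^ k := by
  have hsum := one_add_omega_pow_add_sq 1
  norm_num at hsum
  rw [show omega + 1 = -omega ^ 2 by linear_combination hsum,
    show omega ^ 2 + 1 = -omega by linear_combination hsum, neg_pow, neg_pow, ← pow_mul,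
    mul_comm 2 k, pow_mul, ← one_add_omega_pow_add_sq k]
  ring

theorem stmt16 (l : ℕ) (hl : 3 ≤ l) :
    Tl l (1 + 1) 1 + Tl l (omega + 1) 1 + Tl l (omega ^ 2 + 1) 1
      = 3 * (∑ l₁ ∈ (Finset.Icc 2 (l - 1)).filter (fun l₁ => l₁ % 3 = 1),
            (-1 : ℂ) ^ (l₁ - 1) * (dzeta l₁ (l - l₁) : ℂ))
        + (((l : ℂ) + 1) / 2) * (zetav l : ℂ) - Tl l (-1) 1 := by
  have hweighted : ((l : ℂ) + 1) / 2 * (zetav l : ℂ)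
      = ∑ l₁ ∈ Icc 2 (l - 1), 2 ^ (l₁ - 1) * (dzeta l₁ (l - l₁) : ℂ) := by
    have h := congrArg ((↑) : ℝ → ℂ) (sum_two_pow_mul_dzeta hl)
    push_cast at h
    exact h.symm
  rw [hweighted, mul_sum, sum_filter]
  simp only [Tl, one_pow, mul_one, ← sum_add_distrib, ← sum_sub_distrib]
  refine sum_congr rfl fun l₁ hl₁ ↦ ?_
  have hcoeff := two_pow_add_omega_add_one_pow (l₁ - 1)
  have hdvd : 3 ∣ l₁ - 1 ↔ l₁ % 3 = 1 := by rw [mem_Icc] at hl₁; omega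
  simp only [hdvd] at hcoeff
  split_ifs at hcoeff ⊢ <;> linear_combination (dzeta l₁ (l - l₁) : ℂ) * hcoeff
end

section
/- Let l ≥ 8 be an integer with l ≡ 2 (mod 6). Then ∑_{j=0, j ≡ 4 (mod 6)}^{l} ζ(j)·ζ(l−j) = ((l−1)/6)·ζ(l), where ζ(0) terms do not occur since j ≡ 4 (mod 6) forces 4 ≤ j ≤ l−4. -/
/-!
Write `g(x) = x coth (x / 2) = ∑ gₙ xⁿ`. Then `gₙ = 2 Bₙ / n!` for `n ≠ 1`, `g` is even, and
`ζ(n) = -(2πi)ⁿ gₙ / 4` for even `n ≥ 2`, so the claim becomes the Bernoulli identity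
`3 ∑_{i ≡ 4 (6)} gᵢ g_{l-i} = 2 (1 - l) g_l`.

Let `ω` be a primitive cube root of unity. The addition theorem of `coth`, applied to `x`, `ωx`
and `ω²x` (which sum to `0`), gives `g(ωx) g(x) + ω² g(ω²x) g(x) + ω g(ωx) g(ω²x) = -ωx²`.
The last two products are rescalings of the first, so for `l ≡ 2 (mod 3)` the `l`-th coefficient
says that the twisted convolutions `∑ ωⁱ gᵢ g_{l-i}` and `∑ ω²ⁱ gᵢ g_{l-i}` vanish. Filtering
`i ≡ 1 (mod 3)` with the cube roots of unity thus leaves a third of the full convolution, which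
Euler's identity `g² = 2g - 2xg' + x²` evaluates to `2 (1 - l) g_l`.
-/

open scoped BigOperators
open Finset

theorem one_add_sq_mul_pow_add_mul_sq_pow {R : Type*} [CommRing R] {ω : R}
    (hω : ω ^ 2 + ω + 1 = 0) (i : ℕ) :
    1 + ω ^ 2 * ω ^ i + ω * (ω ^ 2) ^ i = if i % 3 = 1 then 3 else 0 := by
  have hω3 : ω ^ 3 = 1 := by linear_combination (ω - 1) * hω
  rw [← pow_mul, pow_eq_pow_mod i hω3, pow_eq_pow_mod (2 * i) hω3]
  have : i % 3 = 0 ∨ i % 3 = 1 ∨ i % 3 = 2 := by omega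
  rcases this with h | h | h <;> simp only [h, Nat.mul_mod, Nat.reduceMod] <;> norm_num
  · linear_combination hω
  · linear_combination 2 * hω3
  · linear_combination (ω + 1) * hω3 + hω - hω3

namespace PowerSeries

open scoped Nat

variable {A : Type*} [CommRing A] [Algebra ℚ A]

variable (A) in
/-- The power series of `x * coth (x / 2) = 2 * x / (exp x - 1) + x`. -/
noncomputable def evenBernoulliSeries : A⟦X⟧ := 2 * bernoulliPowerSeries A + X

local notation "𝔤" => evenBernoulliSeries A

theorem evenBernoulliSeries_mul_exp_sub_one : 𝔤 * (exp A - 1) = X * (exp A + 1) := by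
  rw [evenBernoulliSeries]
  linear_combination 2 * bernoulliPowerSeries_mul_exp_sub_one A

theorem coeff_evenBernoulliSeries {n : ℕ} (hn : n ≠ 1) :
    coeff n 𝔤 = 2 * algebraMap ℚ A (bernoulli n / n !) := by
  simp [evenBernoulliSeries, ← map_ofNat C 2, bernoulliPowerSeries, coeff_X, hn]

theorem coeff_evenBernoulliSeries_of_odd {n : ℕ} (hn : Odd n) : coeff n 𝔤 = 0 := by
  rcases eq_or_ne n 1 with rfl | hn1
  · simp only [evenBernoulliSeries, ← map_ofNat C 2, bernoulliPowerSeries, map_add, coeff_C_mul,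
      coeff_mk, coeff_one_X, bernoulli_one, Nat.factorial_one, Nat.cast_one, div_one]
    rw [← map_ofNat (algebraMap ℚ A) 2, ← map_mul]
    norm_num
  · rw [coeff_evenBernoulliSeries hn1, bernoulli_eq_zero_of_odd hn (by grind),
      zero_div, map_zero, mul_zero]

theorem bernoulliPowerSeries_sq :
    bernoulliPowerSeries A ^ 2 = bernoulliPowerSeries A - X * bernoulliPowerSeries A
      - X * d⁄dX A (bernoulliPowerSeries A) := by
  have h := bernoulliPowerSeries_mul_exp_sub_one A
  have hd := congrArg (d⁄dX A) h
  rw [Derivation.leibniz, map_sub, derivative_exp, Derivation.map_one_eq_zero, derivative_X,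
    smul_eq_mul, smul_eq_mul] at hd
  linear_combination bernoulliPowerSeries A * hd
    - ((d⁄dX A) (bernoulliPowerSeries A) + bernoulliPowerSeries A) * h

theorem evenBernoulliSeries_sq : 𝔤 ^ 2 = 2 * 𝔤 - 2 * X * d⁄dX A 𝔤 + X ^ 2 := by
  have hd : d⁄dX A 𝔤 = 2 * d⁄dX A (bernoulliPowerSeries A) + 1 := by
    simp [evenBernoulliSeries, ← map_ofNat C 2]
  rw [hd, evenBernoulliSeries]
  linear_combination 4 * bernoulliPowerSeries_sq (A := A)

theorem coeff_evenBernoulliSeries_sq {l : ℕ} (hl : 2 < l) :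
    coeff l (𝔤 ^ 2) = 2 * (1 - l) * coeff l 𝔤 := by
  obtain ⟨m, rfl⟩ : ∃ m, l = m + 1 := ⟨l - 1, by omega⟩
  rw [evenBernoulliSeries_sq, mul_assoc 2 X]
  simp only [← map_ofNat C 2, map_add, map_sub, coeff_C_mul, coeff_succ_X_mul, coeff_derivative,
    coeff_X_pow, if_neg hl.ne', add_zero]
  push_cast
  ring

theorem sum_mod_six_eq_sum_mod_three_coeff_evenBernoulliSeries (l : ℕ) :
    ∑ i ∈ (range (l + 1)).filter (· % 6 = 4), coeff i 𝔤 * coeff (l - i) 𝔤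
      = ∑ i ∈ (range (l + 1)).filter (· % 3 = 1), coeff i 𝔤 * coeff (l - i) 𝔤 := by
  rw [sum_filter, sum_filter]
  refine sum_congr rfl fun i _ => ?_
  by_cases h6 : i % 6 = 4
  · rw [if_pos h6, if_pos (by omega)]
  · rw [if_neg h6]
    split_ifs with h3
    · rw [coeff_evenBernoulliSeries_of_odd (by grind), zero_mul]
    · rfl

theorem coeff_rescale_mul_evenBernoulliSeries (a : A) (l : ℕ) :
    coeff l (rescale a 𝔤 * 𝔤) = ∑ i ∈ range (l + 1), a ^ i * (coeff i 𝔤 * coeff (l - i) 𝔤) := by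
  rw [coeff_mul,
    Nat.sum_antidiagonal_eq_sum_range_succ (fun i j => coeff i (rescale a 𝔤) * coeff j 𝔤)]
  simp only [coeff_rescale, mul_assoc]

theorem rescale_exp_sub_one_ne_zero {a : A} (ha : a ≠ 0) : rescale a (exp A) - 1 ≠ 0 := by
  intro h
  simpa [ha] using congrArg (coeff 1) h

section IsDomain

variable [IsDomain A]

theorem evenBernoulliSeries_cube_root {ω : A} (hω : ω ^ 2 + ω + 1 = 0) :
    rescale ω 𝔤 * 𝔤 + C (ω ^ 2) * (rescale (ω ^ 2) 𝔤 * 𝔤)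
      + C ω * (rescale ω 𝔤 * rescale (ω ^ 2) 𝔤) = -(C ω * X ^ 2) := by
  have hω0 : ω ≠ 0 := by rintro rfl; simp at hω
  have hu := evenBernoulliSeries_mul_exp_sub_one (A := A)
  have hv := congrArg (rescale ω) hu
  have hw := congrArg (rescale (ω ^ 2)) hu
  simp only [map_mul, map_sub, map_add, map_one, rescale_X, map_pow] at hv hw
  have huvw : exp A * rescale ω (exp A) * rescale (ω ^ 2) (exp A) = 1 := by
    have h := exp_mul_exp_eq_exp_add (A := A) 1 ω
    rw [rescale_one, RingHom.id_apply] at h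
    rw [h, exp_mul_exp_eq_exp_add, show 1 + ω + ω ^ 2 = 0 by linear_combination hω]
    simp
  have hC : C ω ^ 2 + C ω + 1 = 0 := by
    rw [← map_pow, ← map_add, ← map_one C, ← map_add, hω, map_zero]
  have hD : (exp A - 1) * (rescale ω (exp A) - 1) * (rescale (ω ^ 2) (exp A) - 1) ≠ 0 := by
    refine mul_ne_zero (mul_ne_zero ?_ (rescale_exp_sub_one_ne_zero hω0))
      (rescale_exp_sub_one_ne_zero (pow_ne_zero 2 hω0))
    simpa using rescale_exp_sub_one_ne_zero (one_ne_zero (α := A))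
  refine mul_right_cancel₀ hD ?_
  rw [map_pow]
  -- Clearing the denominators `exp (a x) - 1` leaves a polynomial identity in `u, v, w` that
  -- holds modulo `u * v * w = 1` and `ω ^ 2 + ω + 1 = 0`.
  set u := exp A
  set v := rescale ω (exp A)
  set w := rescale (ω ^ 2) (exp A)
  set b := rescale ω 𝔤
  set c := rescale (ω ^ 2) 𝔤
  set z := C ω
  set P := X * (u + 1)
  set Q := z * X * (v + 1)
  linear_combination ((w - 1) * b * (v - 1) + z ^ 2 * (v - 1) * c * (w - 1)) * hu
    + ((w - 1) * P + z * (u - 1) * c * (w - 1)) * hv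
    + (z ^ 2 * (v - 1) * P + z * (u - 1) * Q) * hw
    + 4 * z * X ^ 2 * huvw
    + z * (z - 1) * X ^ 2 * ((u + 1) * (w + 1) * (v - 1) + (v + 1) * (w + 1) * (u - 1)) * hC

theorem coeff_rescale_mul_evenBernoulliSeries_eq_zero {ω : A} (hω : ω ^ 2 + ω + 1 = 0)
    {l : ℕ} (hl : 2 < l) (h3 : l % 3 = 2) : coeff l (rescale ω 𝔤 * 𝔤) = 0 := by
  have hω3 : ω ^ 3 = 1 := by linear_combination (ω - 1) * hω
  have hl1 : ω ^ l = ω ^ 2 := by rw [pow_eq_pow_mod l hω3, h3]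
  have hsq : rescale (ω ^ 2) 𝔤 * 𝔤 = rescale (ω ^ 2) (rescale ω 𝔤 * 𝔤) := by
    rw [map_mul, rescale_rescale, ← pow_succ', hω3, rescale_one, RingHom.id_apply, mul_comm]
  have hprod : rescale ω 𝔤 * rescale (ω ^ 2) 𝔤 = rescale ω (rescale ω 𝔤 * 𝔤) := by
    rw [map_mul, rescale_rescale, sq, mul_comm]
  have h := congrArg (coeff l) (evenBernoulliSeries_cube_root hω)
  rw [hsq, hprod] at h
  simp only [map_add, map_neg, coeff_C_mul, coeff_rescale, coeff_X_pow, if_neg hl.ne',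
    mul_zero, neg_zero] at h
  have h3A : (3 : A) ≠ 0 := by
    have := (algebraMap ℚ A).injective.ne (three_ne_zero (α := ℚ))
    rwa [map_ofNat, map_zero] at this
  refine (mul_eq_zero.mp ?_).resolve_left h3A
  have h2l : (ω ^ 2) ^ l = ω := by
    rw [← pow_mul, mul_comm, pow_mul, hl1]
    linear_combination ω * hω3
  rw [h2l, hl1] at h
  linear_combination h - 2 * coeff l (rescale ω 𝔤 * 𝔤) * hω3

theorem three_mul_sum_filter_mod_six_coeff_evenBernoulliSeries {ω : A} (hω : ω ^ 2 + ω + 1 = 0)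
    {l : ℕ} (hl : 2 < l) (h3 : l % 3 = 2) :
    3 * ∑ i ∈ (range (l + 1)).filter (· % 6 = 4), coeff i 𝔤 * coeff (l - i) 𝔤
      = 2 * (1 - l) * coeff l 𝔤 := by
  have hω' : (ω ^ 2) ^ 2 + ω ^ 2 + 1 = 0 := by linear_combination (ω ^ 2 - ω + 1) * hω
  have h1 := coeff_rescale_mul_evenBernoulliSeries (1 : A) l
  have hω1 := coeff_rescale_mul_evenBernoulliSeries ω l
  have hω2 := coeff_rescale_mul_evenBernoulliSeries (ω ^ 2) l
  rw [rescale_one, RingHom.id_apply, ← sq, coeff_evenBernoulliSeries_sq hl] at h1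
  rw [coeff_rescale_mul_evenBernoulliSeries_eq_zero hω hl h3] at hω1
  rw [coeff_rescale_mul_evenBernoulliSeries_eq_zero hω' hl h3] at hω2
  calc 3 * ∑ i ∈ (range (l + 1)).filter (· % 6 = 4), coeff i 𝔤 * coeff (l - i) 𝔤
      = ∑ i ∈ range (l + 1),
          (1 + ω ^ 2 * ω ^ i + ω * (ω ^ 2) ^ i) * (coeff i 𝔤 * coeff (l - i) 𝔤) := by
        simp only [sum_mod_six_eq_sum_mod_three_coeff_evenBernoulliSeries,
          one_add_sq_mul_pow_add_mul_sq_pow hω, ite_mul, zero_mul, sum_ite, sum_const_zero,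
          add_zero, mul_sum]
    _ = 2 * (1 - l) * coeff l 𝔤 := by
        simp only [one_pow, one_mul] at h1
        simp only [add_mul, sum_add_distrib, one_mul, mul_assoc, ← mul_sum]
        rw [← h1, ← hω1, ← hω2]
        ring

end IsDomain

end PowerSeries

open PowerSeries Complex

theorem omega_sq_add_omega_add_one : omega ^ 2 + omega + 1 = 0 := by
  have h := (isPrimitiveRoot_exp 3 three_ne_zero).geom_sum_eq_zero (by norm_num)
  simp only [sum_range_succ, range_zero, sum_empty, Nat.cast_ofNat] at h
  rw [omega]
  linear_combination h

theorem zetav_eq_coeff_evenBernoulliSeries {n : ℕ} (hn : Even n) (hn0 : n ≠ 0) :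
    (zetav n : ℂ) = -(2 * Real.pi * I) ^ n / 4 * coeff n (evenBernoulliSeries ℂ) := by
  obtain ⟨k, rfl⟩ := hn
  rw [← two_mul] at hn0 ⊢
  have hk : k ≠ 0 := by omega
  rw [zetav,
    tsum_pnat_eq_tsum_of_eq_zero (f := fun m : ℕ => 1 / (m : ℝ) ^ (2 * k)) (by simp [hk]),
    (hasSum_zeta_nat hk).tsum_eq, coeff_evenBernoulliSeries (by omega)]
  have h2 : (2 : ℂ) ^ (2 * k - 1) * 2 = 2 ^ (2 * k) := by
    rw [← pow_succ, Nat.sub_add_cancel (by omega)]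
  rw [mul_pow, mul_pow, pow_mul I, I_sq, ← h2]
  push_cast [eq_ratCast]
  ring

theorem stmt19 (l : ℕ) (hl : 8 ≤ l) (h6 : l % 6 = 2) :
    ∑ j ∈ (Finset.range (l + 1)).filter (fun j => j % 6 = 4),
      zetav j * zetav (l - j)
      = (((l : ℝ) - 1) / 6) * zetav l := by
  have hterm : ∀ j ∈ (range (l + 1)).filter (fun j => j % 6 = 4),
      (zetav j : ℂ) * zetav (l - j) = (2 * Real.pi * I) ^ l / 16
        * (coeff j (evenBernoulliSeries ℂ) * coeff (l - j) (evenBernoulliSeries ℂ)) := by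
    intro j hj
    rw [mem_filter, mem_range] at hj
    have hpow : (2 * Real.pi * I) ^ l = (2 * Real.pi * I) ^ j * (2 * Real.pi * I) ^ (l - j) := by
      rw [← pow_add, Nat.add_sub_cancel' (by omega)]
    rw [zetav_eq_coeff_evenBernoulliSeries (by grind) (by omega),
      zetav_eq_coeff_evenBernoulliSeries (by grind) (by omega), hpow]
    ring
  have key := three_mul_sum_filter_mod_six_coeff_evenBernoulliSeries omega_sq_add_omega_add_one
    (show 2 < l by omega) (show l % 3 = 2 by omega)
  apply ofReal_injective
  push_cast
  rw [sum_congr rfl hterm, ← mul_sum, zetav_eq_coeff_evenBernoulliSeries (by grind) (by omega)]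
  linear_combination (2 * Real.pi * I) ^ l / 48 * key
end
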